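/- arXiv:2402.01101 — 4 statements merged into one kernel-verified Lean document; each statement's English description precedes it below -/
import Mathlib

section
/- (Theorem 5.1(i), Euclidean model: Hardy–Poincaré-type inequality.) Let C > 0, 1 < p < ∞ and α ∈ ℝ with C + α + 1 < 0. Assume Δ^D ρ ≤ (C/ρ)·V^{λ-μ} pointwise on ℝⁿ \ ρ^{-1}{0}. Then for every φ ∈ C_c^∞(ℝⁿ \ ρ^{-1}{0}) one has ∫_{ℝⁿ} ρ^{α+p} |⟨∇^D ρ, ∇^D φ⟩|^p V^{τ+λ-μ} dx ≥ (|C+α+1|/p)^p ∫_{ℝⁿ} ρ^α |φ|^p V^{τ+λ-μ} dx. -/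
open MeasureTheory Real

noncomputable section

/-- Euclidean divergence of a vector field on `ℝⁿ`. -/
def divE {n : ℕ} (X : EuclideanSpace ℝ (Fin n) → EuclideanSpace ℝ (Fin n))
    (x : EuclideanSpace ℝ (Fin n)) : ℝ :=
  ∑ i, fderiv ℝ X x (EuclideanSpace.single i 1) i

/-- Euclidean Laplacian. -/
def lapE {n : ℕ} (f : EuclideanSpace ℝ (Fin n) → ℝ) (x : EuclideanSpace ℝ (Fin n)) : ℝ :=
  divE (fun y => gradient f y) x

/-- `V^s = e^{s·u}`. -/
def Vpow {n : ℕ} (u : EuclideanSpace ℝ (Fin n) → ℝ) (s : ℝ)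
    (x : EuclideanSpace ℝ (Fin n)) : ℝ :=
  Real.exp (s * u x)

/-- Affine gradient `∇^D f = V^{μ-λ} ∇f`. -/
def gradD {n : ℕ} (lam mu : ℝ) (u f : EuclideanSpace ℝ (Fin n) → ℝ)
    (x : EuclideanSpace ℝ (Fin n)) : EuclideanSpace ℝ (Fin n) :=
  Vpow u (mu - lam) x • gradient f x

/-- Affine Laplacian `Δ^D f = V^{μ-λ}(Δf + (2μ + nλ)⟨∇u, ∇f⟩)`. -/
def lapD {n : ℕ} (lam mu : ℝ) (u f : EuclideanSpace ℝ (Fin n) → ℝ)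
    (x : EuclideanSpace ℝ (Fin n)) : ℝ :=
  Vpow u (mu - lam) x *
    (lapE f x + (2 * mu + (n : ℝ) * lam) * (inner ℝ (gradient u x) (gradient f x) : ℝ))

section Helpers

open Filter Set

lemma cont_of {X : Type*} [TopologicalSpace X] {S K : Set X} (hS : IsOpen S)
    (hK : IsClosed K) {h : X → ℝ} (h1 : ContinuousOn h S) (h2 : ∀ x ∉ K, h x = 0)
    (hKS : K ⊆ S) : Continuous h := by
  rw [continuous_iff_continuousAt]
  intro x
  by_cases hx : x ∈ S
  · exact h1.continuousAt (hS.mem_nhds hx)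
  · have hxK : x ∉ K := fun h' => hx (hKS h')
    have hev : h =ᶠ[nhds x] (fun _ => 0) := by
      filter_upwards [hK.isOpen_compl.mem_nhds hxK] with y hy
      exact h2 y hy
    rw [continuousAt_congr hev]
    exact continuousAt_const

lemma clm_sum_apply {n : ℕ} (L : EuclideanSpace ℝ (Fin n) →L[ℝ] ℝ)
    (w : EuclideanSpace ℝ (Fin n)) :
    ∑ i, L (EuclideanSpace.single i 1) * w i = L w := by
  conv_rhs => rw [← (EuclideanSpace.basisFun (Fin n) ℝ).sum_repr w]
  rw [map_sum]
  refine Finset.sum_congr rfl fun i _ => ?_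
  rw [_root_.map_smul, EuclideanSpace.basisFun_repr, EuclideanSpace.basisFun_apply]
  simp [mul_comm]

lemma grad_inner {n : ℕ} (f : EuclideanSpace ℝ (Fin n) → ℝ) (x v : EuclideanSpace ℝ (Fin n)) :
    (inner ℝ (gradient f x) v : ℝ) = fderiv ℝ f x v := by
  rw [gradient]
  exact InnerProductSpace.toDual_symm_apply

lemma grad_contDiff {n : ℕ} {f : EuclideanSpace ℝ (Fin n) → ℝ} (hf : ContDiff ℝ (⊤ : ℕ∞) f) :
    ContDiff ℝ (⊤ : ℕ∞) (fun x => gradient f x) := by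
  have : (fun x => gradient f x)
      = (fun L => (InnerProductSpace.toDual ℝ (EuclideanSpace ℝ (Fin n))).symm L)
        ∘ (fun x => fderiv ℝ f x) := rfl
  rw [this]
  exact ((InnerProductSpace.toDual ℝ (EuclideanSpace ℝ (Fin n))).symm.contDiff).comp
    (hf.fderiv_right (by simp))

lemma pi_div_zero {m : ℕ} (Z : (Fin (m+1) → ℝ) → (Fin (m+1) → ℝ))
    (Z' : (Fin (m+1) → ℝ) → ((Fin (m+1) → ℝ) →L[ℝ] (Fin (m+1) → ℝ)))
    (hd : ∀ x, HasFDerivAt Z (Z' x) x) (hc : HasCompactSupport Z)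
    (hcont : Continuous fun x => ∑ i, Z' x (Pi.single i 1) i) :
    ∫ x, ∑ i, Z' x (Pi.single i 1) i = 0 := by
  obtain ⟨R, hR0, hRs⟩ : ∃ R : ℝ, 0 < R ∧ tsupport Z ⊆ Metric.ball 0 R := by
    obtain ⟨R, hR⟩ := hc.isBounded.subset_ball 0
    exact ⟨max R 1, lt_of_lt_of_le one_pos (le_max_right _ _),
      hR.trans (Metric.ball_subset_ball (le_max_left _ _))⟩
  set a : Fin (m+1) → ℝ := fun _ => -R with ha
  set b : Fin (m+1) → ℝ := fun _ => R with hbd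
  have hle : a ≤ b := fun i => by simp only [a, b]; linarith
  have hz' : ∀ x ∉ tsupport Z, Z' x = 0 := by
    intro x hx
    have h0 : Z =ᶠ[nhds x] (fun _ => 0) := by
      filter_upwards [(isOpen_compl_iff.2 (isClosed_tsupport Z)).mem_nhds hx] with y hy
      exact image_eq_zero_of_notMem_tsupport hy
    exact (hd x).unique ((hasFDerivAt_const (0 : Fin (m+1) → ℝ) x).congr_of_eventuallyEq h0)
  have hdiv0 : ∀ x ∉ tsupport Z, ∑ i, Z' x (Pi.single i 1) i = 0 := by
    intro x hx; rw [hz' x hx]; simp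
  have hsub : tsupport Z ⊆ Icc a b := by
    refine hRs.trans ?_
    intro x hx
    rw [Metric.mem_ball, dist_zero_right] at hx
    constructor <;> intro i <;>
      have h := (abs_le.1 (le_of_lt (lt_of_le_of_lt (norm_le_pi_norm x i) hx)))
    · simpa [a] using h.1
    · simpa [b] using h.2
  have key := integral_divergence_of_hasFDerivAt_off_countable a b hle Z Z' ∅
    countable_empty (fun x _ => ((hd x).continuousAt).continuousWithinAt)
    (fun x _ => hd x) (hcont.continuousOn.integrableOn_compact isCompact_Icc)
  have hb : ∀ (i : Fin (m+1)) (c : ℝ), |c| = R → ∀ x : Fin m → ℝ,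
      Z (i.insertNth c x) i = 0 := by
    intro i c hcR x
    have hni : i.insertNth c x ∉ tsupport Z := by
      intro hmem
      have h1 := hRs hmem
      rw [Metric.mem_ball, dist_zero_right] at h1
      have h2 : ‖(i.insertNth c x : Fin (m+1) → ℝ) i‖ ≤ ‖(i.insertNth c x : Fin (m+1) → ℝ)‖ :=
        norm_le_pi_norm _ i
      rw [Fin.insertNth_apply_same] at h2
      rw [Real.norm_eq_abs, hcR] at h2
      linarith
    rw [image_eq_zero_of_notMem_tsupport hni]; rfl
  have faces : ∀ i : Fin (m+1),
      ((∫ x in Icc (a ∘ i.succAbove) (b ∘ i.succAbove), Z (i.insertNth (b i) x) i) -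
        ∫ x in Icc (a ∘ i.succAbove) (b ∘ i.succAbove), Z (i.insertNth (a i) x) i) = 0 := by
    intro i
    have e1 : ∀ x : Fin m → ℝ, Z (i.insertNth (b i) x) i = 0 :=
      fun x => hb i (b i) (abs_of_pos hR0) x
    have e2 : ∀ x : Fin m → ℝ, Z (i.insertNth (a i) x) i = 0 :=
      fun x => hb i (a i) (by rw [ha]; rw [abs_neg]; exact abs_of_pos hR0) x
    rw [integral_congr_ae (ae_of_all _ e1), integral_congr_ae (ae_of_all _ e2)]
    simp
  rw [← setIntegral_eq_integral_of_forall_compl_eq_zero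
    (fun x hx => hdiv0 x (fun hmem => hx (hsub hmem))), key]
  exact Finset.sum_eq_zero fun i _ => faces i

lemma euc_div_zero {n : ℕ} (X : EuclideanSpace ℝ (Fin n) → EuclideanSpace ℝ (Fin n))
    (X' : EuclideanSpace ℝ (Fin n) → (EuclideanSpace ℝ (Fin n) →L[ℝ] EuclideanSpace ℝ (Fin n)))
    (hd : ∀ x, HasFDerivAt X (X' x) x) (hc : HasCompactSupport X)
    (hcont : Continuous fun x => ∑ i, X' x (EuclideanSpace.single i 1) i) :
    ∫ x, ∑ i, X' x (EuclideanSpace.single i 1) i = 0 := by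
  rcases n with _ | m
  · simp
  set e : EuclideanSpace ℝ (Fin (m+1)) ≃L[ℝ] (Fin (m+1) → ℝ) :=
    (EuclideanSpace.equiv (Fin (m+1)) ℝ)
  set Z : (Fin (m+1) → ℝ) → (Fin (m+1) → ℝ) := fun x => e (X (e.symm x)) with hZ
  set Z' : (Fin (m+1) → ℝ) → ((Fin (m+1) → ℝ) →L[ℝ] (Fin (m+1) → ℝ)) :=
    fun x => (e : EuclideanSpace ℝ (Fin (m+1)) →L[ℝ] (Fin (m+1) → ℝ)).comp
      ((X' (e.symm x)).comp (e.symm : (Fin (m+1) → ℝ) →L[ℝ] EuclideanSpace ℝ (Fin (m+1)))) with hZ'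
  have hdZ : ∀ x, HasFDerivAt Z (Z' x) x := by
    intro x
    exact (e.toContinuousLinearMap.hasFDerivAt.comp _
      ((hd (e.symm x)).comp x e.symm.toContinuousLinearMap.hasFDerivAt))
  have hcZ : HasCompactSupport Z := by
    have h1 : HasCompactSupport (X ∘ e.symm) := hc.comp_homeomorph e.symm.toHomeomorph
    exact h1.comp_left (g := e) (map_zero _)
  have hdivZ : ∀ x, ∑ i, Z' x (Pi.single i 1) i
      = ∑ i, X' (e.symm x) (EuclideanSpace.single i 1) i := by
    intro x
    refine Finset.sum_congr rfl fun i _ => ?_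
    rfl
  have hcontZ : Continuous fun x => ∑ i, Z' x (Pi.single i 1) i := by
    simp only [hdivZ]
    exact hcont.comp e.symm.continuous
  have hmp : MeasurePreserving (MeasurableEquiv.toLp 2 (Fin (m+1) → ℝ)) :=
    (EuclideanSpace.volume_preserving_symm_measurableEquiv_toLp _).symm
  have hint : ∫ x, ∑ i, X' x (EuclideanSpace.single i 1) i
      = ∫ x, ∑ i, X' (e.symm x) (EuclideanSpace.single i 1) i := by
    rw [← hmp.integral_comp (MeasurableEquiv.toLp 2 (Fin (m+1) → ℝ)).measurableEmbedding]
    rfl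
  rw [hint, ← integral_congr_ae (ae_of_all _ hdivZ)]
  exact pi_div_zero Z Z' hdZ hcZ hcontZ

end Helpers

set_option maxHeartbeats 2000000 in
theorem stmt11 {n : ℕ} (hn : 1 ≤ n) (lam mu : ℝ)
    (u : EuclideanSpace ℝ (Fin n) → ℝ) (hu : ContDiff ℝ (⊤ : ℕ∞) u)
    (τ : ℝ) (hτ : τ = ((n : ℝ) + 1) * lam + mu)
    (ρ : EuclideanSpace ℝ (Fin n) → ℝ) (hρsm : ContDiff ℝ (⊤ : ℕ∞) ρ)
    (hρ0 : ∀ x, 0 ≤ ρ x)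
    (hρg : ∀ x, ρ x ≠ 0 → ‖gradD lam mu u ρ x‖ = 1)
    (C α p : ℝ) (hC : 0 < C) (hp : 1 < p) (hα : C + α + 1 < 0)
    (hΔ : ∀ x, ρ x ≠ 0 → lapD lam mu u ρ x ≤ (C / ρ x) * Vpow u (lam - mu) x)
    (φ : EuclideanSpace ℝ (Fin n) → ℝ) (hφ : ContDiff ℝ (⊤ : ℕ∞) φ)
    (hφc : HasCompactSupport φ) (hφs : tsupport φ ⊆ {x | ρ x ≠ 0}) :
    ∫ x, ρ x ^ (α + p) * |(inner ℝ (gradD lam mu u ρ x) (gradD lam mu u φ x) : ℝ)| ^ p *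
        Vpow u (τ + lam - mu) x ≥
      (|C + α + 1| / p) ^ p * ∫ x, ρ x ^ α * |φ x| ^ p * Vpow u (τ + lam - mu) x := by
  classical
  -- basic sets
  set K : Set (EuclideanSpace ℝ (Fin n)) := tsupport φ with hKdef
  have hK : IsClosed K := isClosed_tsupport φ
  have hKc : IsCompact K := hφc
  set S : Set (EuclideanSpace ℝ (Fin n)) := {x | ρ x ≠ 0} with hSdef
  have hSopen : IsOpen S := (isClosed_eq hρsm.continuous continuous_const).isOpen_compl
  have hKS : K ⊆ S := hφs
  have hρpos : ∀ x ∈ S, 0 < ρ x := fun x hx => (hρ0 x).lt_of_ne (Ne.symm hx)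
  -- constants
  set A : ℝ := τ + lam - mu with hA
  set Bc : ℝ := 2 * mu + (n : ℝ) * lam with hBc
  have hABc : Bc + (2 * lam - 2 * mu) = A := by rw [hA, hBc, hτ]; ring
  -- Vpow algebra
  have hVpos : ∀ (a : ℝ) (x), 0 < Vpow u a x := fun a x => Real.exp_pos _
  have hVmul : ∀ (a b : ℝ) (x), Vpow u a x * Vpow u b x = Vpow u (a + b) x := by
    intro a b x
    rw [Vpow, Vpow, Vpow, ← Real.exp_add, add_mul]
  have hV0 : ∀ x, Vpow u 0 x = 1 := fun x => by rw [Vpow, zero_mul, Real.exp_zero]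
  -- the function F = |φ|^p and its derivative
  set F : EuclideanSpace ℝ (Fin n) → ℝ := fun x => |φ x| ^ p with hFdef
  have hFc1 : ContDiff ℝ 1 F := by
    have : F = fun x => ‖φ x‖ ^ p := by funext x; rw [Real.norm_eq_abs]
    rw [this]
    exact (hφ.of_le (by simp)).norm_rpow hp
  set dF : EuclideanSpace ℝ (Fin n) → (EuclideanSpace ℝ (Fin n) →L[ℝ] ℝ) :=
    fun x => fderiv ℝ F x with hdFdef
  have hdF : ∀ x, HasFDerivAt F (dF x) x :=
    fun x => (hFc1.differentiable one_ne_zero x).hasFDerivAt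
  have hdFeq : ∀ x, dF x = (p * |φ x| ^ (p - 2) * φ x) • fderiv ℝ φ x := by
    intro x
    have h1 : HasFDerivAt F ((p * |φ x| ^ (p - 2) * φ x) • fderiv ℝ φ x) x := by
      have h2 := (hasDerivAt_abs_rpow (φ x) hp).comp_hasFDerivAt x
        (hφ.differentiable (by simp) x).hasFDerivAt
      exact h2
    exact (hdF x).unique h1
  -- gradient of ρ and its derivative
  set Y : EuclideanSpace ℝ (Fin n) → EuclideanSpace ℝ (Fin n) :=
    fun x => gradient ρ x with hYdef
  have hYsm : ContDiff ℝ (⊤ : ℕ∞) Y := grad_contDiff hρsm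
  have hYc : Continuous Y := hYsm.continuous
  set dY : EuclideanSpace ℝ (Fin n) →
      (EuclideanSpace ℝ (Fin n) →L[ℝ] EuclideanSpace ℝ (Fin n)) := fun x => fderiv ℝ Y x
    with hdYdef
  have hdY : ∀ x, HasFDerivAt Y (dY x) x :=
    fun x => (hYsm.differentiable (by simp) x).hasFDerivAt
  have hlapE : ∀ x, lapE ρ x = ∑ i, dY x (EuclideanSpace.single i 1) i := fun x => rfl
  -- zero facts off K
  have hφ0 : ∀ x ∉ K, φ x = 0 := fun x hx => image_eq_zero_of_notMem_tsupport hx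
  have hφev : ∀ x ∉ K, φ =ᶠ[nhds (x : EuclideanSpace ℝ (Fin n))] (fun _ => 0) := by
    intro x hx
    filter_upwards [hK.isOpen_compl.mem_nhds hx] with y hy
    exact hφ0 y hy
  have hF0 : ∀ x ∉ K, F x = 0 := by
    intro x hx
    rw [hFdef]
    simp only [hφ0 x hx, abs_zero]
    exact Real.zero_rpow (by positivity)
  have hFev : ∀ x ∉ K, F =ᶠ[nhds (x : EuclideanSpace ℝ (Fin n))] (fun _ => 0) := by
    intro x hx
    filter_upwards [hK.isOpen_compl.mem_nhds hx] with y hy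
    exact hF0 y hy
  have hdF0 : ∀ x ∉ K, dF x = 0 := by
    intro x hx
    show fderiv ℝ F x = 0
    rw [(hFev x hx).fderiv_eq]
    exact fderiv_const_apply 0
  have hdφ0 : ∀ x ∉ K, fderiv ℝ φ x = 0 := by
    intro x hx
    rw [(hφev x hx).fderiv_eq]
    exact fderiv_const_apply 0
  have hgradφ0 : ∀ x ∉ K, gradient φ x = 0 := by
    intro x hx
    rw [gradient, hdφ0 x hx, map_zero]
  -- the scalar field g and its derivative dg
  set g : EuclideanSpace ℝ (Fin n) → ℝ :=
    fun x => ρ x ^ (α + 1) * (F x * Vpow u Bc x) with hgdef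
  set dg : EuclideanSpace ℝ (Fin n) → (EuclideanSpace ℝ (Fin n) →L[ℝ] ℝ) := fun x =>
    (F x * Vpow u Bc x * ((α + 1) * ρ x ^ α)) • fderiv ℝ ρ x
    + (ρ x ^ (α + 1) * Vpow u Bc x) • dF x
    + (ρ x ^ (α + 1) * (F x * Vpow u Bc x) * Bc) • fderiv ℝ u x with hdgdef
  have hg0 : ∀ x ∉ K, g x = 0 := by
    intro x hx
    rw [hgdef]
    simp only [hF0 x hx, zero_mul, mul_zero]
  have hdg0 : ∀ x ∉ K, dg x = 0 := by
    intro x hx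
    rw [hdgdef]
    simp only [hF0 x hx, hdF0 x hx, zero_mul, mul_zero, zero_smul, smul_zero, add_zero,
      zero_add, smul_zero]
  have hg : ∀ x, HasFDerivAt g (dg x) x := by
    intro x
    by_cases hx : x ∈ S
    · have hρx : ρ x ≠ 0 := hx
      have h1 : HasFDerivAt (fun y => ρ y ^ (α + 1)) (((α + 1) * ρ x ^ α) • fderiv ℝ ρ x) x := by
        have h1a := (Real.hasDerivAt_rpow_const (x := ρ x) (p := α + 1)
          (Or.inl hρx)).comp_hasFDerivAt x (hρsm.differentiable (by simp) x).hasFDerivAt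
        have : α + 1 - 1 = α := by ring
        rwa [this] at h1a
      have h2 : HasFDerivAt (fun y => Vpow u Bc y) ((Vpow u Bc x * Bc) • fderiv ℝ u x) x := by
        have h2a : HasFDerivAt (fun y => Bc * u y) (Bc • fderiv ℝ u x) x :=
          ((hu.differentiable (by simp) x).hasFDerivAt).const_mul Bc
        have h2b := (Real.hasDerivAt_exp (Bc * u x)).comp_hasFDerivAt x h2a
        have : Real.exp (Bc * u x) • Bc • fderiv ℝ u x = (Vpow u Bc x * Bc) • fderiv ℝ u x := by
          rw [smul_smul]; rfl
        rwa [this] at h2b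
      have h23 : HasFDerivAt (fun y => F y * Vpow u Bc y)
          (F x • ((Vpow u Bc x * Bc) • fderiv ℝ u x) + Vpow u Bc x • dF x) x :=
        (hdF x).mul h2
      have hcomb := h1.mul h23
      rw [show ((fun z => ρ z ^ (α + 1)) * (fun z => F z * Vpow u Bc z)) = g from rfl]
        at hcomb
      have : (fun y => ρ y ^ (α+1)) x
            • (F x • ((Vpow u Bc x * Bc) • fderiv ℝ u x) + Vpow u Bc x • dF x)
          + (fun y => F y * Vpow u Bc y) x • (((α + 1) * ρ x ^ α) • fderiv ℝ ρ x) = dg x := by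
        rw [hdgdef]
        ext v
        simp only [ContinuousLinearMap.add_apply, ContinuousLinearMap.coe_smul',
          Pi.smul_apply, smul_eq_mul]
        ring
      rwa [this] at hcomb
    · have hxK : x ∉ K := fun h => hx (hKS h)
      have hgev : g =ᶠ[nhds x] (fun _ => 0) := by
        filter_upwards [hK.isOpen_compl.mem_nhds hxK] with y hy
        exact hg0 y hy
      have h0 : HasFDerivAt g (0 : EuclideanSpace ℝ (Fin n) →L[ℝ] ℝ) x :=
        (hasFDerivAt_const (0:ℝ) x).congr_of_eventuallyEq hgev
      rwa [hdg0 x hxK]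
  -- the vector field X and its derivative
  set X : EuclideanSpace ℝ (Fin n) → EuclideanSpace ℝ (Fin n) :=
    fun x => g x • Y x with hXdef
  set X' : EuclideanSpace ℝ (Fin n) →
      (EuclideanSpace ℝ (Fin n) →L[ℝ] EuclideanSpace ℝ (Fin n)) :=
    fun x => g x • dY x + (dg x).smulRight (Y x) with hX'def
  have hX : ∀ x, HasFDerivAt X (X' x) x := fun x => (hg x).smul (hdY x)
  have hXcs : HasCompactSupport X := by
    apply HasCompactSupport.intro hKc
    intro x hx
    rw [hXdef]
    simp only [hg0 x hx, zero_smul]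
  -- the divergence of X
  set dvg : EuclideanSpace ℝ (Fin n) → ℝ :=
    fun x => g x * lapE ρ x + dg x (Y x) with hdvgdef
  have hdiv_eq : ∀ x, ∑ i, X' x (EuclideanSpace.single i 1) i = dvg x := by
    intro x
    rw [hdvgdef]
    have : ∀ i : Fin n, X' x (EuclideanSpace.single i 1) i
        = g x * dY x (EuclideanSpace.single i 1) i
          + dg x (EuclideanSpace.single i 1) * Y x i := by
      intro i
      rw [hX'def]
      simp only [ContinuousLinearMap.add_apply, ContinuousLinearMap.coe_smul', Pi.smul_apply,
        ContinuousLinearMap.smulRight_apply, PiLp.add_apply, PiLp.smul_apply, smul_eq_mul]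
    rw [Finset.sum_congr rfl (fun i _ => this i), Finset.sum_add_distrib, ← Finset.mul_sum,
      ← hlapE x, clm_sum_apply]
  -- continuity infrastructure
  have hrpowS : ∀ c : ℝ, ContinuousOn (fun x => ρ x ^ c) S := by
    intro c x hx
    exact ((Real.continuousAt_rpow_const (ρ x) c (Or.inl hx)).comp
      hρsm.continuous.continuousAt).continuousWithinAt
  have hVc : ∀ c : ℝ, Continuous (fun x => Vpow u c x) := by
    intro c
    exact Real.continuous_exp.comp (continuous_const.mul hu.continuous)
  have hFcont : Continuous F := hFc1.continuous
  have hdFc : Continuous dF := hFc1.continuous_fderiv one_ne_zero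
  have hdYc : Continuous dY := hYsm.continuous_fderiv (by simp)
  have hlapEc : Continuous (fun x => lapE ρ x) := by
    simp only [hlapE]
    refine continuous_finset_sum _ (fun i _ => ?_)
    exact (EuclideanSpace.proj i).continuous.comp (hdYc.clm_apply continuous_const)
  have hgradφc : Continuous (fun x => gradient φ x) := (grad_contDiff hφ).continuous
  have hgraduc : Continuous (fun x => gradient u x) := (grad_contDiff hu).continuous
  have hdρYc : Continuous (fun x => fderiv ℝ ρ x (Y x)) :=
    (hρsm.continuous_fderiv (by simp)).clm_apply hYc
  have hdFYc : Continuous (fun x => dF x (Y x)) := hdFc.clm_apply hYc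
  have hduYc : Continuous (fun x => fderiv ℝ u x (Y x)) :=
    (hu.continuous_fderiv (by simp)).clm_apply hYc
  have hgc : Continuous g :=
    cont_of hSopen hK ((hrpowS (α+1)).mul (hFcont.mul (hVc Bc)).continuousOn) hg0 hKS
  have hdgY_eq : ∀ x, dg x (Y x)
      = F x * Vpow u Bc x * ((α + 1) * ρ x ^ α) * (fderiv ℝ ρ x (Y x))
        + ρ x ^ (α + 1) * Vpow u Bc x * (dF x (Y x))
        + ρ x ^ (α + 1) * (F x * Vpow u Bc x) * Bc * (fderiv ℝ u x (Y x)) := by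
    intro x
    rfl
  have hdgYc : Continuous (fun x => dg x (Y x)) := by
    apply cont_of hSopen hK (h := fun x => dg x (Y x))
    · rw [show (fun x => dg x (Y x)) = (fun x =>
        F x * Vpow u Bc x * ((α + 1) * ρ x ^ α) * (fderiv ℝ ρ x (Y x))
        + ρ x ^ (α + 1) * Vpow u Bc x * (dF x (Y x))
        + ρ x ^ (α + 1) * (F x * Vpow u Bc x) * Bc * (fderiv ℝ u x (Y x))) from
        funext hdgY_eq]
      refine ContinuousOn.add (ContinuousOn.add ?_ ?_) ?_
      · exact (((hFcont.mul (hVc Bc)).continuousOn.mul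
          ((continuousOn_const).mul (hrpowS α))).mul hdρYc.continuousOn)
      · exact (((hrpowS (α+1)).mul (hVc Bc).continuousOn).mul hdFYc.continuousOn)
      · exact ((((hrpowS (α+1)).mul (hFcont.mul (hVc Bc)).continuousOn).mul
          continuousOn_const).mul hduYc.continuousOn)
    · intro x hx
      rw [hdg0 x hx]
      simp
    · exact hKS
  have hdvgc : Continuous dvg := (hgc.mul hlapEc).add hdgYc
  have hdvg0 : ∀ x ∉ K, dvg x = 0 := by
    intro x hx
    rw [hdvgdef]
    simp only [hg0 x hx, hdg0 x hx, zero_mul, ContinuousLinearMap.zero_apply, add_zero]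
  have hfun : (fun x => ∑ i, X' x (EuclideanSpace.single i 1) i) = dvg := funext hdiv_eq
  have hintdvg : ∫ x, dvg x = 0 := by
    have h := euc_div_zero X X' hX hXcs (by rw [hfun]; exact hdvgc)
    rwa [hfun] at h
  -- integrability helper
  have hInt : ∀ (h : EuclideanSpace ℝ (Fin n) → ℝ), Continuous h → (∀ x ∉ K, h x = 0) →
      Integrable h := fun h hc h0 =>
    hc.integrable_of_hasCompactSupport (HasCompactSupport.intro hKc h0)
  -- nonnegativity and norm facts
  have hF_nonneg : ∀ x, 0 ≤ F x := fun x => Real.rpow_nonneg (abs_nonneg _) _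
  have hnormρ : ∀ x, ρ x ≠ 0 → ‖gradient ρ x‖ = Vpow u (lam - mu) x := by
    intro x hρx
    have h1 := hρg x hρx
    rw [gradD, norm_smul, Real.norm_eq_abs, abs_of_pos (hVpos _ _)] at h1
    have h2 : Vpow u (mu - lam) x * Vpow u (lam - mu) x = 1 := by
      rw [hVmul]
      have : mu - lam + (lam - mu) = 0 := by ring
      rw [this, hV0]
    exact mul_left_cancel₀ (ne_of_gt (hVpos (mu - lam) x)) (h1.trans h2.symm)
  have hVA : ∀ x, Vpow u Bc x * (Vpow u (lam - mu) x * Vpow u (lam - mu) x)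
      = Vpow u A x := by
    intro x
    rw [hVmul, hVmul]
    congr 1
    rw [hA, hBc, hτ]; ring
  -- the comparison functions
  set P : EuclideanSpace ℝ (Fin n) → ℝ :=
    fun x => ρ x ^ α * F x * Vpow u A x with hPdef
  set QQ : EuclideanSpace ℝ (Fin n) → ℝ :=
    fun x => ρ x ^ (α + 1) * Vpow u Bc x * (dF x (Y x)) with hQQdef
  have hkey : ∀ x, dvg x ≤ (C + α + 1) * P x + QQ x := by
    intro x
    by_cases hx : x ∈ K
    · have hρx : ρ x ≠ 0 := hKS hx
      have hdρY : fderiv ℝ ρ x (Y x) = Vpow u (lam - mu) x * Vpow u (lam - mu) x := by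
        rw [← grad_inner ρ x (Y x)]
        have : Y x = gradient ρ x := rfl
        rw [this, real_inner_self_eq_norm_mul_norm, hnormρ x hρx]
      have hduY : fderiv ℝ u x (Y x) = (inner ℝ (gradient u x) (gradient ρ x) : ℝ) := by
        rw [← grad_inner u x (Y x)]
      have hlapDx : lapE ρ x + Bc * (inner ℝ (gradient u x) (gradient ρ x) : ℝ)
          = Vpow u (lam - mu) x * lapD lam mu u ρ x := by
        rw [lapD, ← mul_assoc, hVmul]
        have : lam - mu + (mu - lam) = 0 := by ring
        rw [this, hV0, one_mul, hBc]
      have hmain : g x * lapE ρ x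
          + ρ x ^ (α + 1) * (F x * Vpow u Bc x) * Bc * (fderiv ℝ u x (Y x)) ≤ C * P x := by
        have e1 : g x * lapE ρ x
            + ρ x ^ (α + 1) * (F x * Vpow u Bc x) * Bc * (fderiv ℝ u x (Y x))
            = (ρ x ^ (α + 1) * F x * (Vpow u Bc x * Vpow u (lam - mu) x))
              * lapD lam mu u ρ x := by
          rw [hduY]
          have e0 : g x = ρ x ^ (α + 1) * (F x * Vpow u Bc x) := rfl
          rw [e0]
          have e0b : ρ x ^ (α + 1) * F x * (Vpow u Bc x * (Vpow u (lam - mu) x * lapD lam mu u ρ x))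
              = (ρ x ^ (α + 1) * F x * (Vpow u Bc x * Vpow u (lam - mu) x)) * lapD lam mu u ρ x := by
            ring
          rw [← e0b, ← hlapDx]
          ring
        rw [e1]
        have hnn : 0 ≤ ρ x ^ (α + 1) * F x * (Vpow u Bc x * Vpow u (lam - mu) x) :=
          mul_nonneg (mul_nonneg (Real.rpow_nonneg (hρ0 x) _) (hF_nonneg x))
            (le_of_lt (mul_pos (hVpos _ _) (hVpos _ _)))
        calc (ρ x ^ (α + 1) * F x * (Vpow u Bc x * Vpow u (lam - mu) x)) * lapD lam mu u ρ x
            ≤ (ρ x ^ (α + 1) * F x * (Vpow u Bc x * Vpow u (lam - mu) x))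
              * ((C / ρ x) * Vpow u (lam - mu) x) :=
            mul_le_mul_of_nonneg_left (hΔ x hρx) hnn
          _ = C * P x := by
            have e2 : ρ x ^ (α + 1) = ρ x ^ α * ρ x := Real.rpow_add_one hρx α
            have e0 : P x = ρ x ^ α * F x * Vpow u A x := rfl
            rw [e0, ← hVA x, e2]
            field_simp
      have hT1 : F x * Vpow u Bc x * ((α + 1) * ρ x ^ α) * (fderiv ℝ ρ x (Y x))
          = (α + 1) * P x := by
        rw [hdρY]
        have e0 : P x = ρ x ^ α * F x * Vpow u A x := rfl
        rw [e0, ← hVA x]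
        ring
      have hd : dvg x = g x * lapE ρ x + dg x (Y x) := rfl
      have hQ : QQ x = ρ x ^ (α + 1) * Vpow u Bc x * (dF x (Y x)) := rfl
      rw [hd, hdgY_eq x]
      linarith [hmain, hT1]
    · have h1 : dvg x = 0 := hdvg0 x hx
      have hP : P x = 0 := by
        have e0 : P x = ρ x ^ α * F x * Vpow u A x := rfl
        rw [e0, hF0 x hx]; ring
      have hQ : QQ x = 0 := by
        have e0 : QQ x = ρ x ^ (α + 1) * Vpow u Bc x * (dF x (Y x)) := rfl
        rw [e0, hdF0 x hx]; simp
      rw [h1, hP, hQ]; simp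
  have hp0 : (0:ℝ) < p := lt_trans one_pos hp
  have hp0' : p ≠ 0 := ne_of_gt hp0
  -- step 1 : integrate the key inequality
  have hP0 : ∀ x ∉ K, P x = 0 := by
    intro x hx
    have e0 : P x = ρ x ^ α * F x * Vpow u A x := rfl
    rw [e0, hF0 x hx]; ring
  have hQQ0 : ∀ x ∉ K, QQ x = 0 := by
    intro x hx
    have e0 : QQ x = ρ x ^ (α + 1) * Vpow u Bc x * (dF x (Y x)) := rfl
    rw [e0, hdF0 x hx]; simp
  have hPc : Continuous P :=
    cont_of hSopen hK (((hrpowS α).mul hFcont.continuousOn).mul (hVc A).continuousOn) hP0 hKS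
  have hQQc : Continuous QQ :=
    cont_of hSopen hK (((hrpowS (α+1)).mul (hVc Bc).continuousOn).mul hdFYc.continuousOn)
      hQQ0 hKS
  have hPint : Integrable P := hInt P hPc hP0
  have hQQint : Integrable QQ := hInt QQ hQQc hQQ0
  have hdvgint : Integrable dvg := hInt dvg hdvgc hdvg0
  have hstep1 : 0 ≤ (C + α + 1) * (∫ x, P x) + ∫ x, QQ x := by
    have h1 : ∫ x, dvg x ≤ ∫ x, ((C + α + 1) * P x + QQ x) :=
      integral_mono hdvgint ((hPint.const_mul _).add hQQint) hkey
    rw [hintdvg] at h1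
    rwa [integral_add (hPint.const_mul _) hQQint, integral_const_mul] at h1
  -- the function G
  set Gf : EuclideanSpace ℝ (Fin n) → ℝ :=
    fun x => (inner ℝ (gradD lam mu u ρ x) (gradD lam mu u φ x) : ℝ) with hGfdef
  have hGf_eq : ∀ x, Gf x = Vpow u (mu - lam) x * Vpow u (mu - lam) x
      * (inner ℝ (gradient ρ x) (gradient φ x) : ℝ) := by
    intro x
    have e0 : Gf x = (inner ℝ (gradD lam mu u ρ x) (gradD lam mu u φ x) : ℝ) := rfl
    rw [e0, gradD, gradD, real_inner_smul_left, real_inner_smul_right]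
    ring
  have hGf0 : ∀ x ∉ K, Gf x = 0 := by
    intro x hx
    rw [hGf_eq x, hgradφ0 x hx, inner_zero_right]
    ring
  have hGfc : Continuous Gf := by
    rw [show Gf = fun x => Vpow u (mu - lam) x * Vpow u (mu - lam) x
      * (inner ℝ (gradient ρ x) (gradient φ x) : ℝ) from funext hGf_eq]
    exact ((hVc _).mul (hVc _)).mul (hYc.inner hgradφc)
  -- conjugate exponent
  set q : ℝ := p / (p - 1) with hqdef
  have hpq : p.HolderConjugate q := Real.HolderConjugate.conjExponent hp
  have hq0 : (0:ℝ) < q := hpq.symm.pos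
  -- Hölder data
  set f1 : EuclideanSpace ℝ (Fin n) → ℝ :=
    fun x => ρ x ^ ((α + p)/p) * |Gf x| * Vpow u (A/p) x with hf1def
  set f2 : EuclideanSpace ℝ (Fin n) → ℝ :=
    fun x => ρ x ^ (α/q) * |φ x| ^ (p - 1) * Vpow u (A/q) x with hf2def
  have hf1nn : ∀ x, 0 ≤ f1 x := by
    intro x
    exact mul_nonneg (mul_nonneg (Real.rpow_nonneg (hρ0 x) _) (abs_nonneg _))
      (le_of_lt (hVpos _ _))
  have hf2nn : ∀ x, 0 ≤ f2 x := by
    intro x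
    exact mul_nonneg (mul_nonneg (Real.rpow_nonneg (hρ0 x) _)
      (Real.rpow_nonneg (abs_nonneg _) _)) (le_of_lt (hVpos _ _))
  have hf10 : ∀ x ∉ K, f1 x = 0 := by
    intro x hx
    have e0 : f1 x = ρ x ^ ((α + p)/p) * |Gf x| * Vpow u (A/p) x := rfl
    rw [e0, hGf0 x hx]; simp
  have hf20 : ∀ x ∉ K, f2 x = 0 := by
    intro x hx
    have e0 : f2 x = ρ x ^ (α/q) * |φ x| ^ (p - 1) * Vpow u (A/q) x := rfl
    rw [e0, hφ0 x hx, abs_zero, Real.zero_rpow (by linarith : p - 1 ≠ 0)]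
    simp
  have hf1c : Continuous f1 :=
    cont_of hSopen hK (((hrpowS _).mul hGfc.abs.continuousOn).mul (hVc _).continuousOn)
      hf10 hKS
  have hf2c : Continuous f2 := by
    refine cont_of hSopen hK ?_ hf20 hKS
    refine ContinuousOn.mul (ContinuousOn.mul (hrpowS _) ?_) (hVc _).continuousOn
    exact (Continuous.rpow_const hφ.continuous.abs (fun x => Or.inr (by linarith))).continuousOn
  have hf1mem : MemLp f1 (ENNReal.ofReal p) :=
    hf1c.memLp_of_hasCompactSupport (HasCompactSupport.intro hKc hf10)
  have hf2mem : MemLp f2 (ENNReal.ofReal q) :=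
    hf2c.memLp_of_hasCompactSupport (HasCompactSupport.intro hKc hf20)
  have hHolder := integral_mul_le_Lp_mul_Lq_of_nonneg hpq (ae_of_all _ hf1nn)
    (ae_of_all _ hf2nn) hf1mem hf2mem
  -- pointwise identities
  have hf1p : ∀ x, f1 x ^ p = ρ x ^ (α + p) * |Gf x| ^ p * Vpow u A x := by
    intro x
    have e0 : f1 x = ρ x ^ ((α + p)/p) * |Gf x| * Vpow u (A/p) x := rfl
    rw [e0, Real.mul_rpow (mul_nonneg (Real.rpow_nonneg (hρ0 x) _) (abs_nonneg _))
      (le_of_lt (hVpos _ _)),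
      Real.mul_rpow (Real.rpow_nonneg (hρ0 x) _) (abs_nonneg _),
      ← Real.rpow_mul (hρ0 x), div_mul_cancel₀ _ hp0']
    congr 1
    rw [Vpow, Vpow, ← Real.exp_mul]
    congr 1
    field_simp
  have hf2q : ∀ x, f2 x ^ q = P x := by
    intro x
    have e0 : f2 x = ρ x ^ (α/q) * |φ x| ^ (p - 1) * Vpow u (A/q) x := rfl
    have e1 : P x = ρ x ^ α * F x * Vpow u A x := rfl
    have e2 : F x = |φ x| ^ p := rfl
    rw [e0, e1, e2, Real.mul_rpow (mul_nonneg (Real.rpow_nonneg (hρ0 x) _)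
      (Real.rpow_nonneg (abs_nonneg _) _)) (le_of_lt (hVpos _ _)),
      Real.mul_rpow (Real.rpow_nonneg (hρ0 x) _) (Real.rpow_nonneg (abs_nonneg _) _),
      ← Real.rpow_mul (hρ0 x), ← Real.rpow_mul (abs_nonneg _),
      div_mul_cancel₀ _ (ne_of_gt hq0)]
    have hp1 : p - 1 ≠ 0 := by linarith
    have e3 : (p - 1) * q = p := by
      rw [hqdef, mul_comm, div_mul_cancel₀ _ hp1]
    rw [e3]
    congr 1
    rw [Vpow, Vpow, ← Real.exp_mul]
    congr 1
    field_simp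
  -- pointwise bound QQ ≤ p * f1 * f2
  have hQQle : ∀ x, QQ x ≤ p * (f1 x * f2 x) := by
    intro x
    by_cases hx : x ∈ K
    · have hρx : ρ x ≠ 0 := hKS hx
      have hρxpos : 0 < ρ x := (hρ0 x).lt_of_ne (Ne.symm hρx)
      set t : ℝ := (inner ℝ (gradient φ x) (gradient ρ x) : ℝ) with htdef
      have hQx : QQ x = (ρ x ^ (α + 1) * Vpow u Bc x) * (p * |φ x| ^ (p - 2) * φ x * t) := by
        have e0 : QQ x = ρ x ^ (α + 1) * Vpow u Bc x * (dF x (Y x)) := rfl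
        rw [e0, hdFeq x]
        have e1 : ((p * |φ x| ^ (p - 2) * φ x) • fderiv ℝ φ x) (Y x)
            = (p * |φ x| ^ (p - 2) * φ x) * (fderiv ℝ φ x (Y x)) := rfl
        have eY : Y x = gradient ρ x := rfl
        rw [e1, ← grad_inner φ x (Y x), eY, ← htdef]
      have hfg : f1 x * f2 x
          = (ρ x ^ (α + 1) * Vpow u Bc x) * (|φ x| ^ (p - 1) * |t|) := by
        have e0 : f1 x = ρ x ^ ((α + p)/p) * |Gf x| * Vpow u (A/p) x := rfl
        have e1 : f2 x = ρ x ^ (α/q) * |φ x| ^ (p - 1) * Vpow u (A/q) x := rfl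
        have hVV : (0:ℝ) < Vpow u (mu - lam) x * Vpow u (mu - lam) x :=
          mul_pos (hVpos _ _) (hVpos _ _)
        have eG : |Gf x| = Vpow u (mu - lam) x * Vpow u (mu - lam) x * |t| := by
          calc |Gf x| = |Vpow u (mu - lam) x * Vpow u (mu - lam) x
                * (inner ℝ (gradient ρ x) (gradient φ x) : ℝ)| := by rw [hGf_eq x]
            _ = |Vpow u (mu - lam) x * Vpow u (mu - lam) x|
                * |(inner ℝ (gradient ρ x) (gradient φ x) : ℝ)| := abs_mul _ _
            _ = Vpow u (mu - lam) x * Vpow u (mu - lam) x * |t| := by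
                rw [abs_of_pos hVV, real_inner_comm, ← htdef]
        have hp1 : p - 1 ≠ 0 := by linarith
        have eρ : ρ x ^ ((α + p)/p) * ρ x ^ (α/q) = ρ x ^ (α + 1) := by
          rw [← Real.rpow_add hρxpos]
          congr 1
          rw [hqdef]
          field_simp
          ring
        have eV : Vpow u (A/p) x * Vpow u (A/q) x
            * (Vpow u (mu - lam) x * Vpow u (mu - lam) x) = Vpow u Bc x := by
          rw [hVmul, hVmul, hVmul]
          congr 1
          rw [hA, hBc, hτ, hqdef]
          field_simp
          ring
        rw [e0, e1, eG]
        calc ρ x ^ ((α + p)/p) * (Vpow u (mu - lam) x * Vpow u (mu - lam) x * |t|)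
              * Vpow u (A/p) x
              * (ρ x ^ (α/q) * |φ x| ^ (p - 1) * Vpow u (A/q) x)
            = (ρ x ^ ((α + p)/p) * ρ x ^ (α/q))
              * (Vpow u (A/p) x * Vpow u (A/q) x
                * (Vpow u (mu - lam) x * Vpow u (mu - lam) x))
              * (|φ x| ^ (p - 1) * |t|) := by ring
          _ = (ρ x ^ (α + 1) * Vpow u Bc x) * (|φ x| ^ (p - 1) * |t|) := by rw [eρ, eV]
      rw [hQx, hfg]
      have hc0 : 0 ≤ ρ x ^ (α + 1) * Vpow u Bc x :=
        mul_nonneg (Real.rpow_nonneg (hρ0 x) _) (le_of_lt (hVpos _ _))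
      have habs : |φ x| ^ (p - 2) * |φ x| ≤ |φ x| ^ (p - 1) := by
        rcases eq_or_ne (φ x) 0 with h0 | h0
        · rw [h0, abs_zero, mul_zero]
          exact Real.rpow_nonneg le_rfl _
        · rw [← Real.rpow_add_one (abs_ne_zero.2 h0)]
          have e : p - 2 + 1 = p - 1 := by ring
          rw [e]
      have hbase : p * |φ x| ^ (p - 2) * φ x * t ≤ p * (|φ x| ^ (p - 1) * |t|) := by
        calc p * |φ x| ^ (p - 2) * φ x * t ≤ |p * |φ x| ^ (p - 2) * φ x * t| := le_abs_self _
          _ = p * (|φ x| ^ (p - 2) * |φ x|) * |t| := by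
              rw [abs_mul, abs_mul, abs_mul, abs_of_pos hp0,
                abs_of_nonneg (Real.rpow_nonneg (abs_nonneg _) _)]
              ring
          _ ≤ p * |φ x| ^ (p - 1) * |t| := by
              have h1 := mul_le_mul_of_nonneg_left habs (le_of_lt hp0)
              exact mul_le_mul_of_nonneg_right h1 (abs_nonneg t)
          _ = p * (|φ x| ^ (p - 1) * |t|) := by ring
      calc (ρ x ^ (α + 1) * Vpow u Bc x) * (p * |φ x| ^ (p - 2) * φ x * t)
          ≤ (ρ x ^ (α + 1) * Vpow u Bc x) * (p * (|φ x| ^ (p - 1) * |t|)) :=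
            mul_le_mul_of_nonneg_left hbase hc0
        _ = p * ((ρ x ^ (α + 1) * Vpow u Bc x) * (|φ x| ^ (p - 1) * |t|)) := by ring
    · have h1 : QQ x = 0 := hQQ0 x hx
      rw [h1]
      exact mul_nonneg (le_of_lt hp0) (mul_nonneg (hf1nn x) (hf2nn x))
  have hfgint : Integrable (fun x => f1 x * f2 x) :=
    hInt _ (hf1c.mul hf2c) (fun x hx => by rw [hf10 x hx]; ring)
  have hstep2 : ∫ x, QQ x
      ≤ p * ((∫ x, f1 x ^ p) ^ (1/p) * (∫ x, f2 x ^ q) ^ (1/q)) := by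
    have h1 : ∫ x, QQ x ≤ ∫ x, p * (f1 x * f2 x) :=
      integral_mono hQQint (hfgint.const_mul p) hQQle
    rw [integral_const_mul] at h1
    exact h1.trans (mul_le_mul_of_nonneg_left hHolder (le_of_lt hp0))
  -- identify the integrals in the goal
  have hIP : ∫ x, f2 x ^ q = ∫ x, P x := integral_congr_ae (ae_of_all _ hf2q)
  have hGoal1 : (fun x => ρ x ^ (α + p)
        * |(inner ℝ (gradD lam mu u ρ x) (gradD lam mu u φ x) : ℝ)| ^ p
        * Vpow u A x) = fun x => f1 x ^ p :=
    funext fun x => (hf1p x).symm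
  rw [ge_iff_le, hGoal1, show (∫ x, P x) = ∫ x, f2 x ^ q from hIP.symm]
  -- final algebra
  have hJnn : 0 ≤ ∫ x, f1 x ^ p :=
    integral_nonneg fun x => Real.rpow_nonneg (hf1nn x) p
  have hInn : 0 ≤ ∫ x, f2 x ^ q :=
    integral_nonneg fun x => Real.rpow_nonneg (hf2nn x) q
  have hcabs : |C + α + 1| = -(C + α + 1) := abs_of_neg hα
  rw [← hIP] at hstep1
  have hchain : |C + α + 1| * (∫ x, f2 x ^ q)
      ≤ p * ((∫ x, f1 x ^ p) ^ (1/p) * (∫ x, f2 x ^ q) ^ (1/q)) := by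
    rw [hcabs]
    linarith [hstep1, hstep2]
  rcases eq_or_lt_of_le hInn with h0 | hpos
  · rw [← h0, mul_zero]
    exact hJnn
  · have hI1p : (0:ℝ) < (∫ x, f2 x ^ q) ^ (1/q) := Real.rpow_pos_of_pos hpos _
    have h5 : (∫ x, f2 x ^ q)
        = (∫ x, f2 x ^ q) ^ (1/p) * (∫ x, f2 x ^ q) ^ (1/q) := by
      rw [← Real.rpow_add hpos,
        show 1/p + 1/q = 1 by rw [one_div, one_div]; exact hpq.inv_add_inv_eq_one,
        Real.rpow_one]
    have h6 : |C + α + 1| * (∫ x, f2 x ^ q) ^ (1/p)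
        ≤ p * (∫ x, f1 x ^ p) ^ (1/p) := by
      have h7 : (|C + α + 1| * (∫ x, f2 x ^ q) ^ (1/p)) * (∫ x, f2 x ^ q) ^ (1/q)
          ≤ (p * (∫ x, f1 x ^ p) ^ (1/p)) * (∫ x, f2 x ^ q) ^ (1/q) := by
        calc (|C + α + 1| * (∫ x, f2 x ^ q) ^ (1/p)) * (∫ x, f2 x ^ q) ^ (1/q)
            = |C + α + 1| * ((∫ x, f2 x ^ q) ^ (1/p) * (∫ x, f2 x ^ q) ^ (1/q)) := by ring
          _ = |C + α + 1| * (∫ x, f2 x ^ q) := by rw [← h5]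
          _ ≤ p * ((∫ x, f1 x ^ p) ^ (1/p) * (∫ x, f2 x ^ q) ^ (1/q)) := hchain
          _ = (p * (∫ x, f1 x ^ p) ^ (1/p)) * (∫ x, f2 x ^ q) ^ (1/q) := by ring
      exact le_of_mul_le_mul_right h7 hI1p
    have h8 : (|C + α + 1| / p) * (∫ x, f2 x ^ q) ^ (1/p) ≤ (∫ x, f1 x ^ p) ^ (1/p) := by
      rw [div_mul_eq_mul_div, div_le_iff₀ hp0]
      calc |C + α + 1| * (∫ x, f2 x ^ q) ^ (1/p) ≤ p * (∫ x, f1 x ^ p) ^ (1/p) := h6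
        _ = (∫ x, f1 x ^ p) ^ (1/p) * p := by ring
    have h9 := Real.rpow_le_rpow
      (mul_nonneg (div_nonneg (abs_nonneg _) (le_of_lt hp0)) (Real.rpow_nonneg hInn _))
      h8 (le_of_lt hp0)
    rw [Real.mul_rpow (div_nonneg (abs_nonneg _) (le_of_lt hp0)) (Real.rpow_nonneg hInn _),
      ← Real.rpow_mul hInn, ← Real.rpow_mul hJnn, one_div_mul_cancel hp0',
      Real.rpow_one, Real.rpow_one] at h9
    exact h9
end
end

section
/- (Theorem 5.3, first inequality, Euclidean model: Heisenberg–Pauli–Weyl-type inequality.) Let C > 0 and assume Δ^D ρ ≥ (C/ρ)·V^{λ-μ} pointwise on ℝⁿ \ ρ^{-1}{0}. Then for every φ ∈ C_c^∞(ℝⁿ \ ρ^{-1}{0}) one has (∫_{ℝⁿ} ρ² φ² V^{τ+λ-μ} dx) · (∫_{ℝⁿ} |∇^D φ|² V^{τ+λ-μ} dx) ≥ ((C+1)²/4) · (∫_{ℝⁿ} φ² V^{τ+λ-μ} dx)². -/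
open MeasureTheory Real

noncomputable section

namespace Stmt14Aux

variable {n : ℕ}

lemma sum_single_eq (v : EuclideanSpace ℝ (Fin n)) :
    ∑ i, v i • EuclideanSpace.single i (1:ℝ) = v := by
  ext j
  rw [WithLp.ofLp_sum, Finset.sum_apply]
  simp [EuclideanSpace.single_apply]

lemma clm_eval (L : EuclideanSpace ℝ (Fin n) →L[ℝ] ℝ) (v : EuclideanSpace ℝ (Fin n)) :
    L v = ∑ i, v i * L (EuclideanSpace.single i 1) := by
  conv_lhs => rw [← sum_single_eq v]
  rw [map_sum]
  simp

lemma integral_fderiv_apply (g : EuclideanSpace ℝ (Fin n) → ℝ)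
    (hg : ContDiff ℝ (⊤ : ℕ∞) g) (hgc : HasCompactSupport g) (v : EuclideanSpace ℝ (Fin n)) :
    ∫ x, fderiv ℝ g x v = 0 := by
  obtain ⟨D, hD⟩ := ContDiff.lipschitzWith_of_hasCompactSupport hgc hg (by simp)
  have h := LipschitzWith.integral_lineDeriv_mul_eq (μ := volume)
    (LipschitzWith.const (b := (1:ℝ))) hD hgc (-v)
  have hz : ∀ x : EuclideanSpace ℝ (Fin n),
      lineDeriv ℝ (fun _ : EuclideanSpace ℝ (Fin n) => (1:ℝ)) x (-v) = 0 := by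
    intro x; simp [lineDeriv]
  simp only [hz, zero_mul, integral_zero, neg_neg, mul_one] at h
  have hfd : ∀ x, lineDeriv ℝ g x v = fderiv ℝ g x v := fun x =>
    (hg.differentiable (by simp) x).lineDeriv_eq_fderiv
  simp only [hfd] at h
  exact h.symm

lemma fderiv_proj (X : EuclideanSpace ℝ (Fin n) → EuclideanSpace ℝ (Fin n))
    (hX : ContDiff ℝ (⊤ : ℕ∞) X) (i : Fin n) (x v : EuclideanSpace ℝ (Fin n)) :
    fderiv ℝ (fun y => X y i) x v = fderiv ℝ X x v i := by
  have : (fun y => X y i) = (EuclideanSpace.proj (𝕜 := ℝ) i) ∘ X := rfl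
  rw [this, fderiv_comp x (EuclideanSpace.proj (𝕜 := ℝ) i).differentiableAt
    (hX.differentiable (by simp) x)]
  rw [ContinuousLinearMap.fderiv]
  rfl

lemma integral_divE_eq_zero (X : EuclideanSpace ℝ (Fin n) → EuclideanSpace ℝ (Fin n))
    (hX : ContDiff ℝ (⊤ : ℕ∞) X) (hXc : HasCompactSupport X) : ∫ x, divE X x = 0 := by
  unfold divE
  rw [integral_finset_sum]
  · refine Finset.sum_eq_zero fun i _ => ?_
    have hg : ContDiff ℝ (⊤ : ℕ∞) (fun y => X y i) :=
      (EuclideanSpace.proj (𝕜 := ℝ) i).contDiff.comp hX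
    have hgc : HasCompactSupport (fun y => X y i) :=
      hXc.comp_left (g := fun w : EuclideanSpace ℝ (Fin n) => w i) rfl
    have := integral_fderiv_apply _ hg hgc (EuclideanSpace.single i 1)
    rw [← this]
    congr 1 with x
    rw [fderiv_proj X hX]
  · intro i _
    apply Continuous.integrable_of_hasCompactSupport
    · have hc : Continuous fun x => fderiv ℝ X x := hX.continuous_fderiv (by simp)
      exact (by fun_prop : Continuous fun v : EuclideanSpace ℝ (Fin n) => v i).comp ((hc.clm_apply continuous_const))
    · apply (hXc.fderiv ℝ).comp_left
        (g := fun L : EuclideanSpace ℝ (Fin n) →L[ℝ] EuclideanSpace ℝ (Fin n)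
          => L (EuclideanSpace.single i 1) i) rfl

lemma divE_smul (h : EuclideanSpace ℝ (Fin n) → ℝ)
    (Y : EuclideanSpace ℝ (Fin n) → EuclideanSpace ℝ (Fin n))
    (x : EuclideanSpace ℝ (Fin n))
    (hh : DifferentiableAt ℝ h x) (hY : DifferentiableAt ℝ Y x) :
    divE (fun y => h y • Y y) x = fderiv ℝ h x (Y x) + h x * divE Y x := by
  unfold divE
  have hd : fderiv ℝ (fun y => h y • Y y) x
      = h x • fderiv ℝ Y x + (fderiv ℝ h x).smulRight (Y x) := fderiv_smul hh hY
  simp only [hd, ContinuousLinearMap.add_apply, ContinuousLinearMap.smul_apply,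
    ContinuousLinearMap.smulRight_apply]
  rw [clm_eval (fderiv ℝ h x) (Y x), Finset.mul_sum, ← Finset.sum_add_distrib]
  congr 1 with i
  simp [PiLp.add_apply, PiLp.smul_apply, smul_eq_mul]
  ring

lemma divE_continuous (X : EuclideanSpace ℝ (Fin n) → EuclideanSpace ℝ (Fin n))
    (hX : ContDiff ℝ (⊤ : ℕ∞) X) : Continuous (divE X) := by
  unfold divE
  refine continuous_finset_sum _ fun i _ => ?_
  exact (by fun_prop : Continuous fun v : EuclideanSpace ℝ (Fin n) => v i).comp
    (((hX.continuous_fderiv (by simp)).clm_apply continuous_const))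

lemma divE_hasCompactSupport (X : EuclideanSpace ℝ (Fin n) → EuclideanSpace ℝ (Fin n))
    (hXc : HasCompactSupport X) : HasCompactSupport (divE X) := by
  exact (hXc.fderiv ℝ).comp_left
    (g := fun L : EuclideanSpace ℝ (Fin n) →L[ℝ] EuclideanSpace ℝ (Fin n)
      => ∑ i, L (EuclideanSpace.single i 1) i) (by simp)

lemma inner_gradient (f : EuclideanSpace ℝ (Fin n) → ℝ) (x v : EuclideanSpace ℝ (Fin n)) :
    (inner ℝ (gradient f x) v : ℝ) = fderiv ℝ f x v := by
  unfold gradient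
  exact InnerProductSpace.toDual_symm_apply

lemma gradient_of_fderiv_eq (f g : EuclideanSpace ℝ (Fin n) → ℝ) (x : EuclideanSpace ℝ (Fin n))
    (c : ℝ) (h : fderiv ℝ g x = c • fderiv ℝ f x) :
    gradient g x = c • gradient f x := by
  unfold gradient
  rw [h, _root_.map_smul]

lemma fderiv_sq (f : EuclideanSpace ℝ (Fin n) → ℝ) (x : EuclideanSpace ℝ (Fin n))
    (hf : DifferentiableAt ℝ f x) :
    fderiv ℝ (fun y => f y ^ 2) x = (2 * f x) • fderiv ℝ f x := by
  have : (fun y => f y ^ 2) = fun y => f y * f y := by ext y; ring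
  rw [this, fderiv_fun_mul hf hf]
  ext v
  simp [smul_eq_mul]
  ring

lemma gradient_sq (f : EuclideanSpace ℝ (Fin n) → ℝ) (x : EuclideanSpace ℝ (Fin n))
    (hf : DifferentiableAt ℝ f x) :
    gradient (fun y => f y ^ 2) x = (2 * f x) • gradient f x :=
  gradient_of_fderiv_eq f _ x _ (fderiv_sq f x hf)

lemma gradient_contDiff (f : EuclideanSpace ℝ (Fin n) → ℝ) (hf : ContDiff ℝ (⊤ : ℕ∞) f) :
    ContDiff ℝ (⊤ : ℕ∞) (fun x => gradient f x) := by
  have h1 : ContDiff ℝ (⊤ : ℕ∞) (fderiv ℝ f) := hf.fderiv_right (by simp)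
  have h2 := (InnerProductSpace.toDual ℝ
    (EuclideanSpace ℝ (Fin n))).symm.toLinearIsometry.toContinuousLinearMap.contDiff (n := (⊤ : ℕ∞))
  exact h2.comp h1

lemma Vpow_contDiff (u : EuclideanSpace ℝ (Fin n) → ℝ) (hu : ContDiff ℝ (⊤ : ℕ∞) u) (s : ℝ) :
    ContDiff ℝ (⊤ : ℕ∞) (Vpow u s) :=
  Real.contDiff_exp.comp (contDiff_const.mul hu)

lemma Vpow_pos (u : EuclideanSpace ℝ (Fin n) → ℝ) (s : ℝ) (x : EuclideanSpace ℝ (Fin n)) :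
    0 < Vpow u s x := Real.exp_pos _

lemma Vpow_mul (u : EuclideanSpace ℝ (Fin n) → ℝ) (s t : ℝ) (x : EuclideanSpace ℝ (Fin n)) :
    Vpow u s x * Vpow u t x = Vpow u (s + t) x := by
  unfold Vpow
  rw [← Real.exp_add]
  ring_nf

lemma hasFDerivAt_Vpow (u : EuclideanSpace ℝ (Fin n) → ℝ) (hu : ContDiff ℝ (⊤ : ℕ∞) u) (s : ℝ)
    (x : EuclideanSpace ℝ (Fin n)) :
    HasFDerivAt (Vpow u s) ((s * Vpow u s x) • fderiv ℝ u x) x := by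
  have h1 : HasFDerivAt (fun y => s * u y) (s • fderiv ℝ u x) x :=
    ((hu.differentiable (by simp) x).hasFDerivAt).const_mul s
  have := h1.exp
  have e : (s * Vpow u s x) • fderiv ℝ u x = Real.exp (s * u x) • s • fderiv ℝ u x := by
    unfold Vpow
    rw [smul_smul]
    ring_nf
  rw [e]
  exact this

lemma key_alg (A B P : ℝ) (hA : 0 ≤ A) (hB : 0 ≤ B) (hP : 0 ≤ P)
    (h : ∀ t : ℝ, 0 < t → t * P ≤ t ^ 2 * A + B) : P ^ 2 ≤ 4 * (A * B) := by
  rcases eq_or_lt_of_le hA with hA0 | hA0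
  · have hP0 : P = 0 := by
      by_contra hne
      have hPpos : 0 < P := lt_of_le_of_ne hP (Ne.symm hne)
      have ht : 0 < (B + 1) / P := by positivity
      have h2 := h _ ht
      rw [← hA0] at h2
      have h3 : (B + 1) / P * P = B + 1 := div_mul_cancel₀ _ (ne_of_gt hPpos)
      rw [h3] at h2
      simp at h2
      linarith
    rw [hP0]
    nlinarith [mul_nonneg hA hB]
  · rcases eq_or_lt_of_le hP with hP0 | hPpos
    · rw [← hP0]
      nlinarith [mul_nonneg hA hB]
    · have ht : 0 < P / (2 * A) := by positivity
      have h2 := h _ ht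
      have e : (P / (2 * A)) ^ 2 * A = P / (2 * A) * (P / 2) := by
        field_simp
      rw [e] at h2
      have e2 : P / (2 * A) * P = 2 * (P / (2 * A) * (P / 2)) := by ring
      rw [e2] at h2
      have h3 : P / (2 * A) * (P / 2) ≤ B := by linarith
      have h4 : P ^ 2 / (4 * A) ≤ B := by
        calc P ^ 2 / (4 * A) = P / (2 * A) * (P / 2) := by field_simp; ring
          _ ≤ B := h3
      calc P ^ 2 = P ^ 2 / (4 * A) * (4 * A) := by field_simp
        _ ≤ B * (4 * A) := mul_le_mul_of_nonneg_right h4 (by positivity)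
        _ = 4 * (A * B) := by ring

end Stmt14Aux

open Stmt14Aux

set_option maxHeartbeats 1000000 in
theorem stmt14 {n : ℕ} (hn : 1 ≤ n) (lam mu : ℝ)
    (u : EuclideanSpace ℝ (Fin n) → ℝ) (hu : ContDiff ℝ (⊤ : ℕ∞) u)
    (τ : ℝ) (hτ : τ = ((n : ℝ) + 1) * lam + mu)
    (ρ : EuclideanSpace ℝ (Fin n) → ℝ) (hρsm : ContDiff ℝ (⊤ : ℕ∞) ρ)
    (hρ0 : ∀ x, 0 ≤ ρ x)
    (hρg : ∀ x, ρ x ≠ 0 → ‖gradD lam mu u ρ x‖ = 1)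
    (C : ℝ) (hC : 0 < C)
    (hΔ : ∀ x, ρ x ≠ 0 → (C / ρ x) * Vpow u (lam - mu) x ≤ lapD lam mu u ρ x)
    (φ : EuclideanSpace ℝ (Fin n) → ℝ) (hφ : ContDiff ℝ (⊤ : ℕ∞) φ)
    (hφc : HasCompactSupport φ) (hφs : tsupport φ ⊆ {x | ρ x ≠ 0}) :
    (∫ x, ρ x ^ 2 * φ x ^ 2 * Vpow u (τ + lam - mu) x) *
        (∫ x, ‖gradD lam mu u φ x‖ ^ 2 * Vpow u (τ + lam - mu) x) ≥
      ((C + 1) ^ 2 / 4) * (∫ x, φ x ^ 2 * Vpow u (τ + lam - mu) x) ^ 2 := by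
  classical
  -- abbreviations
  have hc : τ + mu - lam = 2 * mu + (n : ℝ) * lam := by rw [hτ]; ring
  -- smoothness facts
  have hρ2 : ContDiff ℝ (⊤ : ℕ∞) (fun z => ρ z ^ 2) := hρsm.pow 2
  have hφ2 : ContDiff ℝ (⊤ : ℕ∞) (fun z => φ z ^ 2) := hφ.pow 2
  have hYsm : ContDiff ℝ (⊤ : ℕ∞) (fun y => gradient (fun z => ρ z ^ 2) y) :=
    gradient_contDiff _ hρ2
  have hVc : ContDiff ℝ (⊤ : ℕ∞) (Vpow u (τ + mu - lam)) := Vpow_contDiff u hu _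
  have hGsm : ContDiff ℝ (⊤ : ℕ∞) (fun y => φ y ^ 2 * Vpow u (τ + mu - lam) y) := hφ2.mul hVc
  have hXsm : ContDiff ℝ (⊤ : ℕ∞)
      (fun y => (φ y ^ 2 * Vpow u (τ + mu - lam) y) • gradient (fun z => ρ z ^ 2) y) :=
    hGsm.smul hYsm
  have hGc : HasCompactSupport (fun y => φ y ^ 2 * Vpow u (τ + mu - lam) y) := by
    refine hφc.mono fun x hx => ?_
    simp only [Function.mem_support] at hx ⊢
    intro h0
    exact hx (by rw [h0]; ring)
  have hXc : HasCompactSupport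
      (fun y => (φ y ^ 2 * Vpow u (τ + mu - lam) y) • gradient (fun z => ρ z ^ 2) y) :=
    hGc.smul_right
  have hint0 : ∫ x, divE
      (fun y => (φ y ^ 2 * Vpow u (τ + mu - lam) y) • gradient (fun z => ρ z ^ 2) y) x = 0 :=
    integral_divE_eq_zero _ hXsm hXc
  -- gradient of ρ²
  have hYeq : (fun y => gradient (fun z => ρ z ^ 2) y)
      = fun y => (2 * ρ y) • gradient ρ y :=
    funext fun y => gradient_sq ρ y (hρsm.differentiable (by simp) y)
  -- Laplacian of ρ²
  have hlap2 : ∀ x, lapE (fun z => ρ z ^ 2) x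
      = 2 * (inner ℝ (gradient ρ x) (gradient ρ x) : ℝ) + 2 * ρ x * lapE ρ x := by
    intro x
    show divE (fun y => gradient (fun z => ρ z ^ 2) y) x = _
    rw [hYeq, divE_smul (fun y => 2 * ρ y) (fun y => gradient ρ y) x
      ((hρsm.differentiable (by simp) x).const_mul 2)
      ((gradient_contDiff ρ hρsm).differentiable (by simp) x)]
    have h1 : fderiv ℝ (fun y => 2 * ρ y) x (gradient ρ x)
        = 2 * fderiv ℝ ρ x (gradient ρ x) := by
      rw [fderiv_const_mul (hρsm.differentiable (by simp) x) 2]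
      simp
    rw [h1, ← inner_gradient ρ x (gradient ρ x)]
    rfl
  -- derivative of G evaluated at v
  have hfG : ∀ x v, fderiv ℝ (fun y => φ y ^ 2 * Vpow u (τ + mu - lam) y) x v
      = Vpow u (τ + mu - lam) x * (2 * φ x) * (inner ℝ (gradient φ x) v : ℝ)
        + φ x ^ 2 * ((τ + mu - lam) * Vpow u (τ + mu - lam) x)
          * (inner ℝ (gradient u x) v : ℝ) := by
    intro x v
    have d1 : DifferentiableAt ℝ (fun z => φ z ^ 2) x := hφ2.differentiable (by simp) x
    have d2 : DifferentiableAt ℝ (Vpow u (τ + mu - lam)) x := hVc.differentiable (by simp) x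
    rw [fderiv_fun_mul d1 d2]
    rw [inner_gradient φ x v, inner_gradient u x v]
    simp only [ContinuousLinearMap.add_apply, ContinuousLinearMap.smul_apply, smul_eq_mul]
    rw [(hasFDerivAt_Vpow u hu (τ + mu - lam) x).fderiv, fderiv_sq φ x
      (hφ.differentiable (by simp) x)]
    simp only [ContinuousLinearMap.smul_apply, smul_eq_mul]
    ring
  -- the pointwise key inequality
  have hstar : ∀ x, 2 * (C + 1) * (φ x ^ 2 * Vpow u (τ + lam - mu) x)
      ≤ divE (fun y => (φ y ^ 2 * Vpow u (τ + mu - lam) y)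
            • gradient (fun z => ρ z ^ 2) y) x
        + 4 * (ρ x * |φ x| * ‖gradD lam mu u φ x‖ * Vpow u (τ + lam - mu) x) := by
    intro x
    have hdiv : divE (fun y => (φ y ^ 2 * Vpow u (τ + mu - lam) y)
          • gradient (fun z => ρ z ^ 2) y) x
        = fderiv ℝ (fun y => φ y ^ 2 * Vpow u (τ + mu - lam) y) x
            (gradient (fun z => ρ z ^ 2) x)
          + (φ x ^ 2 * Vpow u (τ + mu - lam) x) * lapE (fun z => ρ z ^ 2) x :=
      divE_smul _ _ x (hGsm.differentiable (by simp) x) (hYsm.differentiable (by simp) x)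
    have hYx : gradient (fun z => ρ z ^ 2) x = (2 * ρ x) • gradient ρ x :=
      congrFun hYeq x
    by_cases hp : φ x = 0
    · rw [hdiv, hfG]
      simp [hp]
    · have hxts : x ∈ tsupport φ := subset_tsupport φ (Function.mem_support.2 hp)
      have hxρ : ρ x ≠ 0 := hφs hxts
      have ha : 0 < ρ x := lt_of_le_of_ne (hρ0 x) (Ne.symm hxρ)
      have he1 : 0 < Vpow u (lam - mu) x := Vpow_pos u _ x
      have he2 : 0 < Vpow u (mu - lam) x := Vpow_pos u _ x
      have he3 : 0 < Vpow u (τ + mu - lam) x := Vpow_pos u _ x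
      have h12 : Vpow u (mu - lam) x * Vpow u (lam - mu) x = 1 := by
        rw [Vpow_mul]
        simp [Vpow]
      have h314 : Vpow u (τ + mu - lam) x
          * (Vpow u (lam - mu) x * Vpow u (lam - mu) x) = Vpow u (τ + lam - mu) x := by
        rw [Vpow_mul, Vpow_mul]
        congr 1
        ring
      -- norm of gradient ρ
      have hgρD : Vpow u (mu - lam) x * ‖gradient ρ x‖ = 1 := by
        have h := hρg x hxρ
        unfold gradD at h
        rwa [norm_smul, Real.norm_eq_abs, abs_of_pos he2] at h
      have hN : ‖gradient ρ x‖ = Vpow u (lam - mu) x :=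
        mul_left_cancel₀ (ne_of_gt he2) (by rw [hgρD, h12])
      -- norm of gradD φ
      have hgDφ : ‖gradD lam mu u φ x‖ = Vpow u (mu - lam) x * ‖gradient φ x‖ := by
        unfold gradD
        rw [norm_smul, Real.norm_eq_abs, abs_of_pos he2]
      -- lower bound from the Laplacian comparison
      have hL : C * Vpow u (lam - mu) x ^ 2
          ≤ ρ x * (lapE ρ x
            + (τ + mu - lam) * (inner ℝ (gradient u x) (gradient ρ x) : ℝ)) := by
        have h := hΔ x hxρ
        unfold lapD at h
        rw [← hc] at h
        have h' := mul_le_mul_of_nonneg_right h (le_of_lt (mul_pos ha he1))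
        have lhs_eq : C / ρ x * Vpow u (lam - mu) x * (ρ x * Vpow u (lam - mu) x)
            = C * Vpow u (lam - mu) x ^ 2 := by
          field_simp
        have rhs_eq : Vpow u (mu - lam) x * (lapE ρ x + (τ + mu - lam)
              * (inner ℝ (gradient u x) (gradient ρ x) : ℝ)) * (ρ x * Vpow u (lam - mu) x)
            = ρ x * (lapE ρ x + (τ + mu - lam)
              * (inner ℝ (gradient u x) (gradient ρ x) : ℝ))
              * (Vpow u (mu - lam) x * Vpow u (lam - mu) x) := by ring
        rw [lhs_eq, rhs_eq, h12, mul_one] at h'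
        exact h'
      -- Cauchy-Schwarz lower bound
      have hlower : -(|φ x| * (‖gradient φ x‖ * Vpow u (lam - mu) x))
          ≤ φ x * (inner ℝ (gradient φ x) (gradient ρ x) : ℝ) := by
        have h1 : |(inner ℝ (gradient φ x) (gradient ρ x) : ℝ)|
            ≤ ‖gradient φ x‖ * ‖gradient ρ x‖ := abs_real_inner_le_norm _ _
        rw [hN] at h1
        have h2 : |φ x * (inner ℝ (gradient φ x) (gradient ρ x) : ℝ)|
            = |φ x| * |(inner ℝ (gradient φ x) (gradient ρ x) : ℝ)| := abs_mul _ _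
        have h3 := neg_abs_le (φ x * (inner ℝ (gradient φ x) (gradient ρ x) : ℝ))
        nlinarith [abs_nonneg (φ x)]
      -- assemble
      rw [hdiv, hYx, hfG x ((2 * ρ x) • gradient ρ x), real_inner_smul_right,
        real_inner_smul_right, hlap2 x, hgDφ, ← h314, real_inner_self_eq_norm_sq, hN]
      have hterm : ρ x * |φ x| * (Vpow u (mu - lam) x * ‖gradient φ x‖)
          * (Vpow u (τ + mu - lam) x * (Vpow u (lam - mu) x * Vpow u (lam - mu) x))
          = ρ x * |φ x| * ‖gradient φ x‖
            * (Vpow u (τ + mu - lam) x * Vpow u (lam - mu) x) := by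
        calc ρ x * |φ x| * (Vpow u (mu - lam) x * ‖gradient φ x‖)
            * (Vpow u (τ + mu - lam) x * (Vpow u (lam - mu) x * Vpow u (lam - mu) x))
            = ρ x * |φ x| * ‖gradient φ x‖
              * (Vpow u (τ + mu - lam) x * Vpow u (lam - mu) x)
              * (Vpow u (mu - lam) x * Vpow u (lam - mu) x) := by ring
          _ = ρ x * |φ x| * ‖gradient φ x‖
              * (Vpow u (τ + mu - lam) x * Vpow u (lam - mu) x) := by rw [h12, mul_one]
      rw [hterm]
      have t1 : 0 ≤ 4 * (ρ x) * Vpow u (τ + mu - lam) x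
          * (φ x * (inner ℝ (gradient φ x) (gradient ρ x) : ℝ)
            + |φ x| * (‖gradient φ x‖ * Vpow u (lam - mu) x)) := by
        apply mul_nonneg
        · positivity
        · linarith
      have t2 : 0 ≤ 2 * φ x ^ 2 * Vpow u (τ + mu - lam) x
          * (ρ x * (lapE ρ x
              + (τ + mu - lam) * (inner ℝ (gradient u x) (gradient ρ x) : ℝ))
            - C * Vpow u (lam - mu) x ^ 2) := by
        apply mul_nonneg
        · positivity
        · linarith
      nlinarith [t1, t2]
  -- integrability facts
  have contw : Continuous (Vpow u (τ + lam - mu)) := (Vpow_contDiff u hu _).continuous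
  have contgφ : Continuous (fun x => gradient φ x) := (gradient_contDiff φ hφ).continuous
  have contgD : Continuous (fun x => ‖gradD lam mu u φ x‖) := by
    unfold gradD
    exact (((Vpow_contDiff u hu (mu - lam)).continuous.smul contgφ)).norm
  have key : ∀ f : EuclideanSpace ℝ (Fin n) → ℝ, Continuous f →
      (∀ x, φ x = 0 → f x = 0) → Integrable f := by
    intro f hf h0
    refine hf.integrable_of_hasCompactSupport (hφc.mono fun x hx => ?_)
    simp only [Function.mem_support] at hx ⊢
    exact fun h => hx (h0 x h)
  have int1 : Integrable (fun x => divE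
      (fun y => (φ y ^ 2 * Vpow u (τ + mu - lam) y) • gradient (fun z => ρ z ^ 2) y) x) :=
    (divE_continuous _ hXsm).integrable_of_hasCompactSupport (divE_hasCompactSupport _ hXc)
  have int2 : Integrable (fun x => ρ x * |φ x| * ‖gradD lam mu u φ x‖
      * Vpow u (τ + lam - mu) x) := by
    refine key _ ?_ fun x hx => by rw [hx]; simp
    exact ((hρsm.continuous.mul hφ.continuous.abs).mul contgD).mul contw
  have int3 : Integrable (fun x => φ x ^ 2 * Vpow u (τ + lam - mu) x) := by
    refine key _ ?_ fun x hx => by rw [hx]; ring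
    exact ((hφ.continuous.pow 2).mul contw)
  have int4 : Integrable (fun x => ρ x ^ 2 * φ x ^ 2 * Vpow u (τ + lam - mu) x) := by
    refine key _ ?_ fun x hx => by rw [hx]; ring
    exact (((hρsm.continuous.pow 2).mul (hφ.continuous.pow 2)).mul contw)
  have int5 : Integrable (fun x => ‖gradD lam mu u φ x‖ ^ 2 * Vpow u (τ + lam - mu) x) := by
    refine ((contgD.pow 2).mul contw).integrable_of_hasCompactSupport
      (hφc.mono' fun x hx => ?_)
    simp only [Function.mem_support] at hx
    by_contra hxts
    apply hx
    have hev : φ =ᶠ[nhds x] 0 := notMem_tsupport_iff_eventuallyEq.1 hxts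
    have hfd : fderiv ℝ φ x = 0 := by
      rw [hev.fderiv_eq]
      exact fderiv_const_apply 0
    have hgr : gradient φ x = 0 := by
      unfold gradient
      rw [hfd]
      simp
    unfold gradD
    simp [hgr]
  -- integrate the pointwise inequality
  have step1 : ∫ x, 2 * (C + 1) * (φ x ^ 2 * Vpow u (τ + lam - mu) x)
      ≤ ∫ x, (divE (fun y => (φ y ^ 2 * Vpow u (τ + mu - lam) y)
          • gradient (fun z => ρ z ^ 2) y) x
        + 4 * (ρ x * |φ x| * ‖gradD lam mu u φ x‖ * Vpow u (τ + lam - mu) x)) :=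
    integral_mono (int3.const_mul _) (int1.add (int2.const_mul 4)) hstar
  rw [integral_add int1 (int2.const_mul 4), hint0, zero_add, integral_const_mul,
    integral_const_mul] at step1
  -- Cauchy-Schwarz via the elementary quadratic trick
  have step2 : ∀ t : ℝ, 0 < t →
      t * ((C + 1) * ∫ x, φ x ^ 2 * Vpow u (τ + lam - mu) x)
      ≤ t ^ 2 * (∫ x, ρ x ^ 2 * φ x ^ 2 * Vpow u (τ + lam - mu) x)
        + ∫ x, ‖gradD lam mu u φ x‖ ^ 2 * Vpow u (τ + lam - mu) x := by
    intro t ht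
    have hpt : ∀ x, 2 * t * (ρ x * |φ x| * ‖gradD lam mu u φ x‖ * Vpow u (τ + lam - mu) x)
        ≤ t ^ 2 * (ρ x ^ 2 * φ x ^ 2 * Vpow u (τ + lam - mu) x)
          + ‖gradD lam mu u φ x‖ ^ 2 * Vpow u (τ + lam - mu) x := by
      intro x
      rcases abs_cases (φ x) with ⟨h1, _⟩ | ⟨h1, _⟩ <;> rw [h1]
      · nlinarith [mul_nonneg (sq_nonneg (t * (ρ x * φ x) - ‖gradD lam mu u φ x‖))
          (le_of_lt (Vpow_pos u (τ + lam - mu) x))]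
      · nlinarith [mul_nonneg (sq_nonneg (t * (ρ x * φ x) + ‖gradD lam mu u φ x‖))
          (le_of_lt (Vpow_pos u (τ + lam - mu) x))]
    have h2 : ∫ x, 2 * t * (ρ x * |φ x| * ‖gradD lam mu u φ x‖ * Vpow u (τ + lam - mu) x)
        ≤ ∫ x, (t ^ 2 * (ρ x ^ 2 * φ x ^ 2 * Vpow u (τ + lam - mu) x)
          + ‖gradD lam mu u φ x‖ ^ 2 * Vpow u (τ + lam - mu) x) :=
      integral_mono (int2.const_mul _) ((int4.const_mul _).add int5) hpt
    rw [integral_add (int4.const_mul _) int5, integral_const_mul, integral_const_mul] at h2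
    -- combine with step1
    have h3 : t * ((C + 1) * ∫ x, φ x ^ 2 * Vpow u (τ + lam - mu) x)
        ≤ t * (2 * ∫ x, ρ x * |φ x| * ‖gradD lam mu u φ x‖ * Vpow u (τ + lam - mu) x) := by
      apply mul_le_mul_of_nonneg_left _ (le_of_lt ht)
      linarith
    linarith
  -- nonnegativity of the integrals
  have hE : 0 ≤ ∫ x, φ x ^ 2 * Vpow u (τ + lam - mu) x :=
    integral_nonneg fun x => mul_nonneg (sq_nonneg _) (le_of_lt (Vpow_pos u _ x))
  have hA : 0 ≤ ∫ x, ρ x ^ 2 * φ x ^ 2 * Vpow u (τ + lam - mu) x :=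
    integral_nonneg fun x => mul_nonneg (mul_nonneg (sq_nonneg _) (sq_nonneg _))
      (le_of_lt (Vpow_pos u _ x))
  have hB : 0 ≤ ∫ x, ‖gradD lam mu u φ x‖ ^ 2 * Vpow u (τ + lam - mu) x :=
    integral_nonneg fun x => mul_nonneg (sq_nonneg _) (le_of_lt (Vpow_pos u _ x))
  have hP : 0 ≤ (C + 1) * ∫ x, φ x ^ 2 * Vpow u (τ + lam - mu) x := by
    apply mul_nonneg _ hE
    linarith
  have hkey := key_alg _ _ _ hA hB hP step2
  nlinarith [hkey, hE]
end
end

section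
/- (Theorem 5.3, second inequality, Euclidean model: second-order Heisenberg–Pauli–Weyl-type inequality.) Let C > 1 and assume Δ^D ρ ≥ (C/ρ)·V^{λ-μ} pointwise on ℝⁿ \ ρ^{-1}{0}. Then for every φ ∈ C_c^∞(ℝⁿ \ ρ^{-1}{0}) one has (∫_{ℝⁿ} ρ⁴ φ² V^{τ+λ-μ} dx) · (∫_{ℝⁿ} (Δ^D φ)² V^{τ+μ-λ} dx) ≥ ((C+1)⁴/16) · (∫_{ℝⁿ} φ² V^{τ+λ-μ} dx)². -/
open MeasureTheory Real
open ContDiff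

noncomputable section

namespace Stmt15

abbrev Esp (n : ℕ) := EuclideanSpace ℝ (Fin n)

variable {n : ℕ}

lemma inffy : (∞ : WithTop ℕ∞) + 1 ≤ ∞ := by norm_num

lemma inner_gradient (f : Esp n → ℝ) (x v : Esp n) :
    (inner ℝ (gradient f x) v : ℝ) = fderiv ℝ f x v := by
  rw [gradient]; exact InnerProductSpace.toDual_symm_apply

lemma gradient_apply (f : Esp n → ℝ) (x : Esp n) (i : Fin n) :
    gradient f x i = fderiv ℝ f x (EuclideanSpace.single i 1) := by
  rw [← inner_gradient]
  have := EuclideanSpace.inner_single_right (𝕜 := ℝ) i 1 (gradient f x)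
  simpa using this.symm

lemma contDiff_gradient (f : Esp n → ℝ) (hf : ContDiff ℝ ∞ f) :
    ContDiff ℝ ∞ (fun x => gradient f x) := by
  have h1 : ContDiff ℝ ∞ (fderiv ℝ f) := hf.fderiv_right (m := ∞) inffy
  exact ((InnerProductSpace.toDual ℝ (Esp n)).symm.contDiff).comp h1

lemma support_gradient_subset (f : Esp n → ℝ) :
    Function.support (fun x => gradient f x) ⊆ tsupport f := by
  intro x hx
  by_contra hxt
  apply hx
  have : fderiv ℝ f x = 0 := by
    have := support_fderiv_subset ℝ (f := f)
    by_contra h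
    exact hxt (this h)
  simp [gradient, this]

lemma integral_fderiv_v_eq_zero (g : Esp n → ℝ) (hg : ContDiff ℝ ∞ g)
    (hgc : HasCompactSupport g) (v : Esp n) :
    ∫ x, fderiv ℝ g x v = 0 := by
  have hgd : Differentiable ℝ g := hg.differentiable (by norm_num)
  have hcont : Continuous fun x => fderiv ℝ g x v :=
    ((hg.fderiv_right (m := ∞) inffy).continuous).clm_apply continuous_const
  have hsupp : HasCompactSupport fun x => fderiv ℝ g x v :=
    (hgc.fderiv (𝕜 := ℝ)).mono' (by
      intro x hx
      apply subset_tsupport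
      simp only [Function.mem_support, ne_eq]
      intro h0
      exact (Function.mem_support.mp hx) (by simp [h0]))
  have h := integral_mul_fderiv_eq_neg_fderiv_mul_of_integrable
    (μ := (volume : Measure (Esp n))) (f := fun _ : Esp n => (1:ℝ)) (g := g) (v := v)
    ?_ ?_ ?_ (fun x _ => differentiableAt_const _) (fun x _ => hgd x)
  · simpa using h
  · have : (fun x : Esp n => fderiv ℝ (fun _ : Esp n => (1:ℝ)) x v * g x) = fun _ => 0 := by
      ext x; simp [fderiv_const]
    rw [this]; exact integrable_zero _ _ _
  · simpa using hcont.integrable_of_hasCompactSupport hsupp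
  · simpa using (hg.continuous.integrable_of_hasCompactSupport hgc)

lemma integral_divE_eq_zero (X : Esp n → Esp n) (hX : ContDiff ℝ ∞ X)
    (hXc : HasCompactSupport X) : ∫ x, divE X x = 0 := by
  have hXd : Differentiable ℝ X := hX.differentiable (by norm_num)
  have hcomp : ∀ (i : Fin n) (x : Esp n),
      fderiv ℝ X x (EuclideanSpace.single i 1) i
        = fderiv ℝ (fun y => X y i) x (EuclideanSpace.single i 1) := by
    intro i x
    have : fderiv ℝ (fun y => (EuclideanSpace.proj (𝕜 := ℝ) i) (X y)) x
        = (EuclideanSpace.proj (𝕜 := ℝ) i).comp (fderiv ℝ X x) :=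
      ((EuclideanSpace.proj (𝕜 := ℝ) i).hasFDerivAt.comp x (hXd x).hasFDerivAt).fderiv
    have h2 := congrArg (fun L => L (EuclideanSpace.single i 1)) this
    simpa using h2.symm
  have hint : ∀ i : Fin n, Integrable (fun x => fderiv ℝ X x (EuclideanSpace.single i 1) i) := by
    intro i
    have hcont : Continuous fun x => fderiv ℝ X x (EuclideanSpace.single i 1) i := by
      have h1 : Continuous fun x => fderiv ℝ X x (EuclideanSpace.single i 1) :=
        ((hX.fderiv_right (m := ∞) inffy).continuous).clm_apply continuous_const
      exact (EuclideanSpace.proj (𝕜 := ℝ) i).continuous.comp h1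
    apply hcont.integrable_of_hasCompactSupport
    apply (hXc.fderiv (𝕜 := ℝ)).mono'
    intro x hx
    apply subset_tsupport
    simp only [Function.mem_support, ne_eq]
    intro h0; exact (Function.mem_support.mp hx) (by simp [h0])
  unfold divE
  rw [integral_finset_sum _ (fun i _ => hint i)]
  refine Finset.sum_eq_zero fun i _ => ?_
  have : (fun x => fderiv ℝ X x (EuclideanSpace.single i 1) i)
      = fun x => fderiv ℝ (fun y => X y i) x (EuclideanSpace.single i 1) := by
    ext x; exact hcomp i x
  rw [this]
  apply integral_fderiv_v_eq_zero _ ?_ ?_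
  · exact ((EuclideanSpace.proj (𝕜 := ℝ) i).contDiff).comp hX
  · exact hXc.comp_left (g := fun w : Esp n => w i) rfl

lemma divE_smul_grad (f g : Esp n → ℝ) (hf : ContDiff ℝ ∞ f) (hg : ContDiff ℝ ∞ g) (x : Esp n) :
    divE (fun y => f y • gradient g y) x
      = (inner ℝ (gradient f x) (gradient g x) : ℝ) + f x * lapE g x := by
  have hG : ContDiff ℝ ∞ (fun y => gradient g y) := contDiff_gradient g hg
  have hGd : DifferentiableAt ℝ (fun y => gradient g y) x :=
    (hG.differentiable (by norm_num)) x
  have hfd : DifferentiableAt ℝ f x := (hf.differentiable (by norm_num)) x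
  have hfder : ∀ v : Esp n, fderiv ℝ (fun y => f y • gradient g y) x v
      = f x • fderiv ℝ (fun y => gradient g y) x v + fderiv ℝ f x v • gradient g x := by
    intro v
    rw [fderiv_fun_smul hfd hGd]
    simp
  unfold lapE divE
  have : ∀ i : Fin n, fderiv ℝ (fun y => f y • gradient g y) x (EuclideanSpace.single i 1) i
      = f x * fderiv ℝ (fun y => gradient g y) x (EuclideanSpace.single i 1) i
        + fderiv ℝ f x (EuclideanSpace.single i 1) * gradient g x i := by
    intro i
    rw [hfder]
    simp [PiLp.smul_apply, smul_eq_mul]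
  rw [Finset.sum_congr rfl (fun i _ => this i)]
  rw [Finset.sum_add_distrib, ← Finset.mul_sum]
  rw [add_comm]
  congr 1
  rw [real_inner_comm, PiLp.inner_apply]
  apply Finset.sum_congr rfl
  intro i _
  rw [← gradient_apply]
  simp [RCLike.inner_apply, mul_comm]

lemma Vpow_mul (u : Esp n → ℝ) (a b : ℝ) (x : Esp n) :
    Vpow u a x * Vpow u b x = Vpow u (a + b) x := by
  unfold Vpow; rw [← Real.exp_add]; congr 1; ring

lemma Vpow_pos (u : Esp n → ℝ) (s : ℝ) (x : Esp n) : 0 < Vpow u s x := Real.exp_pos _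

lemma Vpow_sq_half (u : Esp n → ℝ) (a : ℝ) (x : Esp n) :
    Vpow u (a / 2) x ^ 2 = Vpow u a x := by
  rw [sq, Vpow_mul, add_halves]

lemma continuous_Vpow (u : Esp n → ℝ) (hu : Continuous u) (s : ℝ) :
    Continuous (Vpow u s) :=
  Real.continuous_exp.comp (continuous_const.mul hu)

lemma continuous_lapE (f : Esp n → ℝ) (hf : ContDiff ℝ ∞ f) : Continuous (lapE f) := by
  have hG : ContDiff ℝ ∞ (fun y => gradient f y) := contDiff_gradient f hf
  have h1 : Continuous (fderiv ℝ (fun y => gradient f y)) :=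
    (hG.fderiv_right (m := ∞) inffy).continuous
  unfold lapE divE
  apply continuous_finset_sum
  intro i _
  exact (EuclideanSpace.proj (𝕜 := ℝ) i).continuous.comp (h1.clm_apply continuous_const)

lemma gradient_eq_zero_of_nmem (f : Esp n → ℝ) (x : Esp n) (hx : x ∉ tsupport f) :
    gradient f x = 0 := by
  by_contra h
  exact hx (support_gradient_subset f (Function.mem_support.mpr h))

lemma lapE_eq_zero_of_nmem (f : Esp n → ℝ) (x : Esp n) (hx : x ∉ tsupport f) :
    lapE f x = 0 := by
  have hsub : tsupport (fun y => gradient f y) ⊆ tsupport f :=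
    closure_minimal (support_gradient_subset f) (isClosed_tsupport f)
  have h0 : fderiv ℝ (fun y => gradient f y) x = 0 := by
    by_contra h
    exact hx (hsub (support_fderiv_subset ℝ (Function.mem_support.mpr h)))
  unfold lapE divE
  simp [h0]

lemma fderiv_exp_mul_apply (u h : Esp n → ℝ) (hu : ContDiff ℝ ∞ u) (hh : ContDiff ℝ ∞ h)
    (s : ℝ) (x v : Esp n) :
    fderiv ℝ (fun y => Real.exp (s * u y) * h y) x v
      = Real.exp (s * u x) * (fderiv ℝ h x v + s * h x * fderiv ℝ u x v) := by
  have du : DifferentiableAt ℝ u x := hu.differentiable (by norm_num) x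
  have dh : DifferentiableAt ℝ h x := hh.differentiable (by norm_num) x
  have dsu : DifferentiableAt ℝ (fun y => s * u y) x := du.const_mul s
  have de : DifferentiableAt ℝ (fun y => Real.exp (s * u y)) x := dsu.exp
  rw [fderiv_fun_mul de dh]
  simp only [ContinuousLinearMap.add_apply, ContinuousLinearMap.smul_apply, smul_eq_mul]
  rw [_root_.fderiv_exp dsu]
  simp only [ContinuousLinearMap.smul_apply, smul_eq_mul]
  rw [fderiv_const_mul du s]
  simp only [ContinuousLinearMap.smul_apply, smul_eq_mul]
  ring

lemma fderiv_mul3_apply (a b : Esp n → ℝ) (ha : ContDiff ℝ ∞ a) (hb : ContDiff ℝ ∞ b)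
    (x v : Esp n) :
    fderiv ℝ (fun y => a y * b y * b y) x v
      = b x * b x * fderiv ℝ a x v + 2 * a x * b x * fderiv ℝ b x v := by
  have da : DifferentiableAt ℝ a x := ha.differentiable (by norm_num) x
  have db : DifferentiableAt ℝ b x := hb.differentiable (by norm_num) x
  have dab : DifferentiableAt ℝ (fun y => a y * b y) x := da.mul db
  rw [fderiv_fun_mul dab db]
  simp only [ContinuousLinearMap.add_apply, ContinuousLinearMap.smul_apply, smul_eq_mul]
  rw [fderiv_fun_mul da db]
  simp only [ContinuousLinearMap.add_apply, ContinuousLinearMap.smul_apply, smul_eq_mul]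
  ring

lemma integral_identity (u g h : Esp n → ℝ) (hu : ContDiff ℝ ∞ u) (hg : ContDiff ℝ ∞ g)
    (hh : ContDiff ℝ ∞ h) (hhc : HasCompactSupport h) (s : ℝ) :
    ∫ x, Real.exp (s * u x) * ((inner ℝ (gradient h x) (gradient g x) : ℝ)
        + s * h x * (inner ℝ (gradient u x) (gradient g x) : ℝ) + h x * lapE g x) = 0 := by
  have he : ContDiff ℝ ∞ fun y => Real.exp (s * u y) :=
    Real.contDiff_exp.comp (contDiff_const.mul hu)
  have hf : ContDiff ℝ ∞ fun y => Real.exp (s * u y) * h y := he.mul hh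
  have hX : ContDiff ℝ ∞ fun y => (Real.exp (s * u y) * h y) • gradient g y :=
    hf.smul (contDiff_gradient g hg)
  have hXc : HasCompactSupport fun y => (Real.exp (s * u y) * h y) • gradient g y := by
    apply hhc.mono'
    intro x hx
    have : h x ≠ 0 := by
      intro h0; apply Function.mem_support.mp hx; simp [h0]
    exact subset_tsupport h (Function.mem_support.mpr this)
  have h0 := integral_divE_eq_zero _ hX hXc
  rw [← h0]
  congr 1
  funext x
  rw [divE_smul_grad _ g hf hg x]
  have hgv := inner_gradient (fun y => Real.exp (s * u y) * h y) x (gradient g x)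
  rw [fderiv_exp_mul_apply u h hu hh s x (gradient g x)] at hgv
  rw [hgv, ← inner_gradient h x (gradient g x), ← inner_gradient u x (gradient g x)]
  ring

lemma cauchy_schwarz_integral (f g : Esp n → ℝ) (hf2 : Integrable (fun x => f x ^ 2))
    (hg2 : Integrable (fun x => g x ^ 2)) (hfg : Integrable (fun x => f x * g x)) :
    (∫ x, f x * g x) ^ 2 ≤ (∫ x, f x ^ 2) * (∫ x, g x ^ 2) := by
  have key : ∀ t : ℝ, 0 ≤ (∫ x, f x ^ 2) * (t * t) + (2 * ∫ x, f x * g x) * t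
      + (∫ x, g x ^ 2) := by
    intro t
    have h0 : 0 ≤ ∫ x, (t * f x + g x) ^ 2 := integral_nonneg fun x => sq_nonneg _
    have heq : (fun x => (t * f x + g x) ^ 2)
        = fun x => (t * t) * f x ^ 2 + (2 * t) * (f x * g x) + g x ^ 2 := by
      funext x; ring
    rw [heq] at h0
    have i12 : Integrable (fun x => (t * t) * f x ^ 2 + (2 * t) * (f x * g x)) :=
      (hf2.const_mul _).add (hfg.const_mul _)
    rw [integral_add i12 hg2, integral_add (hf2.const_mul (t * t)) (hfg.const_mul (2 * t)),
      MeasureTheory.integral_const_mul, MeasureTheory.integral_const_mul] at h0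
    nlinarith [h0]
  have hd := discrim_le_zero key
  rw [discrim] at hd
  nlinarith [hd]

end Stmt15

open Stmt15 in
theorem stmt15 {n : ℕ} (hn : 1 ≤ n) (lam mu : ℝ)
    (u : EuclideanSpace ℝ (Fin n) → ℝ) (hu : ContDiff ℝ (⊤ : ℕ∞) u)
    (τ : ℝ) (hτ : τ = ((n : ℝ) + 1) * lam + mu)
    (ρ : EuclideanSpace ℝ (Fin n) → ℝ) (hρsm : ContDiff ℝ (⊤ : ℕ∞) ρ)
    (hρ0 : ∀ x, 0 ≤ ρ x)
    (hρg : ∀ x, ρ x ≠ 0 → ‖gradD lam mu u ρ x‖ = 1)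
    (C : ℝ) (hC : 1 < C)
    (hΔ : ∀ x, ρ x ≠ 0 → (C / ρ x) * Vpow u (lam - mu) x ≤ lapD lam mu u ρ x)
    (φ : EuclideanSpace ℝ (Fin n) → ℝ) (hφ : ContDiff ℝ (⊤ : ℕ∞) φ)
    (hφc : HasCompactSupport φ) (hφs : tsupport φ ⊆ {x | ρ x ≠ 0}) :
    (∫ x, ρ x ^ 4 * φ x ^ 2 * Vpow u (τ + lam - mu) x) *
        (∫ x, (lapD lam mu u φ x) ^ 2 * Vpow u (τ + mu - lam) x) ≥
      ((C + 1) ^ 4 / 16) * (∫ x, φ x ^ 2 * Vpow u (τ + lam - mu) x) ^ 2 := by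
  have hu' : ContDiff ℝ ∞ u := hu.of_le (by simp)
  have hρ' : ContDiff ℝ ∞ ρ := hρsm.of_le (by simp)
  have hφ' : ContDiff ℝ ∞ φ := hφ.of_le (by simp)
  obtain ⟨s₀, hs₀def⟩ : ∃ s₀ : ℝ, s₀ = 2 * mu + (n : ℝ) * lam := ⟨_, rfl⟩
  have hτs : τ = s₀ + lam - mu := by rw [hτ, hs₀def]; ring
  -- continuity facts
  have cu : Continuous u := hu.continuous
  have cρ : Continuous ρ := hρsm.continuous
  have cφ : Continuous φ := hφ.continuous
  have cV : ∀ s : ℝ, Continuous (Vpow u s) := continuous_Vpow u cu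
  have cgu : Continuous fun x => gradient u x := (contDiff_gradient u hu').continuous
  have cgρ : Continuous fun x => gradient ρ x := (contDiff_gradient ρ hρ').continuous
  have cgφ : Continuous fun x => gradient φ x := (contDiff_gradient φ hφ').continuous
  have clρ : Continuous (lapE ρ) := continuous_lapE ρ hρ'
  have clφ : Continuous (lapE φ) := continuous_lapE φ hφ'
  have clDρ : Continuous fun x => lapD lam mu u ρ x := by
    unfold lapD
    exact (cV _).mul (clρ.add (continuous_const.mul (cgu.inner cgρ)))
  have clDφ : Continuous fun x => lapD lam mu u φ x := by
    unfold lapD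
    exact (cV _).mul (clφ.add (continuous_const.mul (cgu.inner cgφ)))
  -- vanishing off the support of φ
  have vφ : ∀ x, x ∉ tsupport φ → φ x = 0 := fun x hx => image_eq_zero_of_notMem_tsupport hx
  have vgφ : ∀ x, x ∉ tsupport φ → gradient φ x = 0 := fun x hx =>
    gradient_eq_zero_of_nmem φ x hx
  have vlφ : ∀ x, x ∉ tsupport φ → lapE φ x = 0 := fun x hx => lapE_eq_zero_of_nmem φ x hx
  have vlDφ : ∀ x, x ∉ tsupport φ → lapD lam mu u φ x = 0 := by
    intro x hx
    unfold lapD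
    rw [vlφ x hx, vgφ x hx]
    simp
  have keyInt : ∀ F : Esp n → ℝ, Continuous F → (∀ x, x ∉ tsupport φ → F x = 0) →
      Integrable F := by
    intro F hc h0
    apply hc.integrable_of_hasCompactSupport
    apply hφc.mono'
    intro x hx
    by_contra hxt
    exact (Function.mem_support.mp hx) (h0 x hxt)
  -- the positive-φ lemma
  have hρne : ∀ x, φ x ≠ 0 → ρ x ≠ 0 := fun x hx =>
    hφs (subset_tsupport φ (Function.mem_support.mpr hx))
  have hgrnorm : ∀ x, φ x ≠ 0 → ‖gradient ρ x‖ = Vpow u (lam - mu) x := by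
    intro x hx
    have h1 := hρg x (hρne x hx)
    simp only [gradD] at h1
    rw [norm_smul, Real.norm_eq_abs, abs_of_pos (Vpow_pos u (mu - lam) x)] at h1
    have h2 : Vpow u (mu - lam) x * Vpow u (lam - mu) x = 1 := by
      rw [Vpow_mul, show mu - lam + (lam - mu) = 0 by ring]
      simp [Vpow]
    exact mul_left_cancel₀ (ne_of_gt (Vpow_pos u (mu - lam) x)) (h1.trans h2.symm)
  -- named integrals
  set Av := ∫ x, ρ x ^ 4 * φ x ^ 2 * Vpow u (τ + lam - mu) x with hAv
  set Bv := ∫ x, (lapD lam mu u φ x) ^ 2 * Vpow u (τ + mu - lam) x with hBv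
  set Iv := ∫ x, φ x ^ 2 * Vpow u (τ + lam - mu) x with hIv
  set Jv := ∫ x, ρ x ^ 2 * φ x ^ 2 * Vpow u (τ + lam - mu) x with hJv
  set Gv := ∫ x, ‖gradient φ x‖ ^ 2 * Vpow u s₀ x with hGv
  set Mv := ∫ x, (ρ x * |φ x| * Vpow u ((τ + lam - mu) / 2) x) *
      (‖gradient φ x‖ * Vpow u (s₀ / 2) x) with hMv
  set Nv := ∫ x, (|φ x| * Vpow u ((τ + lam - mu) / 2) x) *
      (|lapD lam mu u φ x| * Vpow u ((τ + mu - lam) / 2) x) with hNv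
  -- integrability
  have iI : Integrable fun x => φ x ^ 2 * Vpow u (τ + lam - mu) x :=
    keyInt _ ((cφ.pow 2).mul (cV _)) (fun x hx => by simp [vφ x hx])
  have iT1 : Integrable fun x => ρ x * φ x ^ 2 * (Vpow u τ x * lapD lam mu u ρ x) :=
    keyInt _ ((cρ.mul (cφ.pow 2)).mul ((cV τ).mul clDρ)) (fun x hx => by simp [vφ x hx])
  have iT2 : Integrable fun x => φ x ^ 2 * ‖gradient ρ x‖ ^ 2 * Vpow u s₀ x :=
    keyInt _ (((cφ.pow 2).mul (cgρ.norm.pow 2)).mul (cV s₀)) (fun x hx => by simp [vφ x hx])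
  have iT3 : Integrable fun x => 2 * Vpow u s₀ x * ρ x * φ x *
      (inner ℝ (gradient φ x) (gradient ρ x) : ℝ) :=
    keyInt _ (((((continuous_const.mul (cV s₀)).mul cρ).mul cφ).mul (cgφ.inner cgρ)))
      (fun x hx => by simp [vφ x hx])
  have iU1 : Integrable fun x => ‖gradient φ x‖ ^ 2 * Vpow u s₀ x :=
    keyInt _ ((cgφ.norm.pow 2).mul (cV s₀)) (fun x hx => by simp [vgφ x hx])
  have iU2 : Integrable fun x => φ x * (Vpow u τ x * lapD lam mu u φ x) :=
    keyInt _ (cφ.mul ((cV τ).mul clDφ)) (fun x hx => by simp [vφ x hx])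
  have if1sq : Integrable fun x => (ρ x * |φ x| * Vpow u ((τ + lam - mu) / 2) x) ^ 2 :=
    keyInt _ (((cρ.mul cφ.abs).mul (cV _)).pow 2) (fun x hx => by simp [vφ x hx])
  have if2sq : Integrable fun x => (‖gradient φ x‖ * Vpow u (s₀ / 2) x) ^ 2 :=
    keyInt _ ((cgφ.norm.mul (cV _)).pow 2) (fun x hx => by simp [vgφ x hx])
  have if12 : Integrable fun x => (ρ x * |φ x| * Vpow u ((τ + lam - mu) / 2) x) *
      (‖gradient φ x‖ * Vpow u (s₀ / 2) x) :=
    keyInt _ (((cρ.mul cφ.abs).mul (cV _)).mul (cgφ.norm.mul (cV _)))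
      (fun x hx => by simp [vφ x hx])
  have ifAsq : Integrable fun x => (ρ x ^ 2 * |φ x| * Vpow u ((τ + lam - mu) / 2) x) ^ 2 :=
    keyInt _ ((((cρ.pow 2).mul cφ.abs).mul (cV _)).pow 2) (fun x hx => by simp [vφ x hx])
  have ig1sq : Integrable fun x => (|φ x| * Vpow u ((τ + lam - mu) / 2) x) ^ 2 :=
    keyInt _ ((cφ.abs.mul (cV _)).pow 2) (fun x hx => by simp [vφ x hx])
  have ifAg1 : Integrable fun x => (ρ x ^ 2 * |φ x| * Vpow u ((τ + lam - mu) / 2) x) *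
      (|φ x| * Vpow u ((τ + lam - mu) / 2) x) :=
    keyInt _ ((((cρ.pow 2).mul cφ.abs).mul (cV _)).mul (cφ.abs.mul (cV _)))
      (fun x hx => by simp [vφ x hx])
  have ig2sq : Integrable fun x => (|lapD lam mu u φ x| * Vpow u ((τ + mu - lam) / 2) x) ^ 2 :=
    keyInt _ ((clDφ.abs.mul (cV _)).pow 2) (fun x hx => by simp [vlDφ x hx])
  have ig1g2 : Integrable fun x => (|φ x| * Vpow u ((τ + lam - mu) / 2) x) *
      (|lapD lam mu u φ x| * Vpow u ((τ + mu - lam) / 2) x) :=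
    keyInt _ ((cφ.abs.mul (cV _)).mul (clDφ.abs.mul (cV _)))
      (fun x hx => by simp [vφ x hx])
  -- identity 1
  have e1 := integral_identity u ρ (fun y => ρ y * φ y * φ y) hu' hρ'
    ((hρ'.mul hφ').mul hφ') (hφc.mul_left) s₀
  have id1 : ∫ x, (ρ x * φ x ^ 2 * (Vpow u τ x * lapD lam mu u ρ x)
      + φ x ^ 2 * ‖gradient ρ x‖ ^ 2 * Vpow u s₀ x
      + 2 * Vpow u s₀ x * ρ x * φ x * (inner ℝ (gradient φ x) (gradient ρ x) : ℝ)) = 0 := by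
    rw [← e1]
    congr 1
    funext x
    have hg1 : (inner ℝ (gradient (fun y => ρ y * φ y * φ y) x) (gradient ρ x) : ℝ)
        = φ x * φ x * (inner ℝ (gradient ρ x) (gradient ρ x) : ℝ)
          + 2 * ρ x * φ x * (inner ℝ (gradient φ x) (gradient ρ x) : ℝ) := by
      rw [inner_gradient (fun y => ρ y * φ y * φ y) x (gradient ρ x),
        fderiv_mul3_apply ρ φ hρ' hφ' x (gradient ρ x),
        ← inner_gradient ρ x (gradient ρ x), ← inner_gradient φ x (gradient ρ x)]
    rw [hg1, real_inner_self_eq_norm_sq (gradient ρ x)]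
    have hV : Vpow u τ x * Vpow u (mu - lam) x = Vpow u s₀ x := by
      rw [Vpow_mul]; congr 1; rw [hτs]; ring
    unfold lapD
    rw [← hs₀def]
    simp only [Vpow] at hV ⊢
    linear_combination (ρ x * φ x ^ 2 *
      (lapE ρ x + s₀ * (inner ℝ (gradient u x) (gradient ρ x) : ℝ))) * hV
  -- identity 2
  have e2 := integral_identity u φ φ hu' hφ' hφ' hφc s₀
  have id2 : ∫ x, (‖gradient φ x‖ ^ 2 * Vpow u s₀ x
      + φ x * (Vpow u τ x * lapD lam mu u φ x)) = 0 := by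
    rw [← e2]
    congr 1
    funext x
    rw [real_inner_self_eq_norm_sq (gradient φ x)]
    have hV : Vpow u τ x * Vpow u (mu - lam) x = Vpow u s₀ x := by
      rw [Vpow_mul]; congr 1; rw [hτs]; ring
    unfold lapD
    rw [← hs₀def]
    simp only [Vpow] at hV ⊢
    linear_combination (φ x *
      (lapE φ x + s₀ * (inner ℝ (gradient u x) (gradient φ x) : ℝ))) * hV
  -- splits
  have hsplit1 : (∫ x, ρ x * φ x ^ 2 * (Vpow u τ x * lapD lam mu u ρ x))
      + (∫ x, φ x ^ 2 * ‖gradient ρ x‖ ^ 2 * Vpow u s₀ x)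
      + (∫ x, 2 * Vpow u s₀ x * ρ x * φ x *
          (inner ℝ (gradient φ x) (gradient ρ x) : ℝ)) = 0 := by
    have h12 : Integrable (fun x => ρ x * φ x ^ 2 * (Vpow u τ x * lapD lam mu u ρ x)
        + φ x ^ 2 * ‖gradient ρ x‖ ^ 2 * Vpow u s₀ x) := iT1.add iT2
    rw [← integral_add iT1 iT2, ← integral_add h12 iT3]
    exact id1
  have hsplit2 : Gv + (∫ x, φ x * (Vpow u τ x * lapD lam mu u φ x)) = 0 := by
    rw [hGv, ← integral_add iU1 iU2]
    exact id2
  -- pointwise bounds for identity 1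
  have p1 : ∀ x, C * (φ x ^ 2 * Vpow u (τ + lam - mu) x)
      ≤ ρ x * φ x ^ 2 * (Vpow u τ x * lapD lam mu u ρ x) := by
    intro x
    by_cases hx0 : φ x = 0
    · simp [hx0]
    · have hρx : ρ x ≠ 0 := hρne x hx0
      have hρpos : 0 < ρ x := lt_of_le_of_ne (hρ0 x) (Ne.symm hρx)
      have hlap := hΔ x hρx
      have hstep : Vpow u τ x * ((C / ρ x) * Vpow u (lam - mu) x)
          ≤ Vpow u τ x * lapD lam mu u ρ x :=
        mul_le_mul_of_nonneg_left hlap (le_of_lt (Vpow_pos u τ x))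
      have hstep2 : ρ x * φ x ^ 2 * (Vpow u τ x * ((C / ρ x) * Vpow u (lam - mu) x))
          ≤ ρ x * φ x ^ 2 * (Vpow u τ x * lapD lam mu u ρ x) :=
        mul_le_mul_of_nonneg_left hstep (by positivity)
      refine le_trans (le_of_eq ?_) hstep2
      have hv : Vpow u τ x * Vpow u (lam - mu) x = Vpow u (τ + lam - mu) x := by
        rw [Vpow_mul]; congr 1; ring
      rw [← hv]
      field_simp
  have p2 : ∀ x, φ x ^ 2 * Vpow u (τ + lam - mu) x
      ≤ φ x ^ 2 * ‖gradient ρ x‖ ^ 2 * Vpow u s₀ x := by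
    intro x
    by_cases hx0 : φ x = 0
    · simp [hx0]
    · rw [hgrnorm x hx0]
      have hv2 : Vpow u (lam - mu) x ^ 2 * Vpow u s₀ x = Vpow u (τ + lam - mu) x := by
        rw [sq, Vpow_mul, Vpow_mul]; congr 1; rw [hτs]; ring
      refine le_of_eq ?_
      linear_combination (-(φ x ^ 2)) * hv2
  have p3 : ∀ x, -(2 * Vpow u s₀ x * ρ x * φ x *
        (inner ℝ (gradient φ x) (gradient ρ x) : ℝ))
      ≤ 2 * ((ρ x * |φ x| * Vpow u ((τ + lam - mu) / 2) x) *
        (‖gradient φ x‖ * Vpow u (s₀ / 2) x)) := by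
    intro x
    by_cases hx0 : φ x = 0
    · simp [hx0]
    · have habs : |(inner ℝ (gradient φ x) (gradient ρ x) : ℝ)|
          ≤ ‖gradient φ x‖ * ‖gradient ρ x‖ := abs_real_inner_le_norm _ _
      have hv3 : Vpow u s₀ x * Vpow u (lam - mu) x
          = Vpow u ((τ + lam - mu) / 2) x * Vpow u (s₀ / 2) x := by
        rw [Vpow_mul, Vpow_mul]; congr 1; rw [hτs]; ring
      have hkey : -(φ x * (inner ℝ (gradient φ x) (gradient ρ x) : ℝ))
          ≤ |φ x| * (‖gradient φ x‖ * ‖gradient ρ x‖) := by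
        calc -(φ x * (inner ℝ (gradient φ x) (gradient ρ x) : ℝ))
            ≤ |φ x * (inner ℝ (gradient φ x) (gradient ρ x) : ℝ)| := neg_le_abs _
          _ = |φ x| * |(inner ℝ (gradient φ x) (gradient ρ x) : ℝ)| := abs_mul _ _
          _ ≤ |φ x| * (‖gradient φ x‖ * ‖gradient ρ x‖) :=
              mul_le_mul_of_nonneg_left habs (abs_nonneg _)
      have hmul := mul_le_mul_of_nonneg_left hkey
        (mul_nonneg (mul_nonneg (by norm_num) (Vpow_pos u s₀ x).le) (hρ0 x) : (0:ℝ) ≤ 2 * Vpow u s₀ x * ρ x)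
      calc -(2 * Vpow u s₀ x * ρ x * φ x * (inner ℝ (gradient φ x) (gradient ρ x) : ℝ))
          = (2 * Vpow u s₀ x * ρ x) *
            (-(φ x * (inner ℝ (gradient φ x) (gradient ρ x) : ℝ))) := by ring
        _ ≤ (2 * Vpow u s₀ x * ρ x) * (|φ x| * (‖gradient φ x‖ * ‖gradient ρ x‖)) := hmul
        _ = 2 * ((ρ x * |φ x| * Vpow u ((τ + lam - mu) / 2) x) *
            (‖gradient φ x‖ * Vpow u (s₀ / 2) x)) := by
            rw [hgrnorm x hx0]
            linear_combination (2 * ρ x * |φ x| * ‖gradient φ x‖) * hv3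
  -- pointwise bound for identity 2
  have pU : ∀ x, -(φ x * (Vpow u τ x * lapD lam mu u φ x))
      ≤ (|φ x| * Vpow u ((τ + lam - mu) / 2) x) *
        (|lapD lam mu u φ x| * Vpow u ((τ + mu - lam) / 2) x) := by
    intro x
    have hv4 : Vpow u ((τ + lam - mu) / 2) x * Vpow u ((τ + mu - lam) / 2) x
        = Vpow u τ x := by
      rw [Vpow_mul]; congr 1; ring
    calc -(φ x * (Vpow u τ x * lapD lam mu u φ x))
        ≤ |φ x * (Vpow u τ x * lapD lam mu u φ x)| := neg_le_abs _
      _ = |φ x| * (Vpow u τ x * |lapD lam mu u φ x|) := by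
          rw [abs_mul, abs_mul, abs_of_pos (Vpow_pos u τ x)]
      _ = (|φ x| * Vpow u ((τ + lam - mu) / 2) x) *
          (|lapD lam mu u φ x| * Vpow u ((τ + mu - lam) / 2) x) := by
          linear_combination (-(|φ x| * |lapD lam mu u φ x|)) * hv4
  -- integrate the bounds
  have hT1b : C * Iv ≤ ∫ x, ρ x * φ x ^ 2 * (Vpow u τ x * lapD lam mu u ρ x) := by
    rw [hIv, ← MeasureTheory.integral_const_mul]
    exact integral_mono (iI.const_mul C) iT1 p1
  have hT2b : Iv ≤ ∫ x, φ x ^ 2 * ‖gradient ρ x‖ ^ 2 * Vpow u s₀ x := by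
    rw [hIv]
    exact integral_mono iI iT2 p2
  have hT3b : -(∫ x, 2 * Vpow u s₀ x * ρ x * φ x *
      (inner ℝ (gradient φ x) (gradient ρ x) : ℝ)) ≤ 2 * Mv := by
    rw [hMv, ← MeasureTheory.integral_const_mul, ← integral_neg]
    exact integral_mono iT3.neg (if12.const_mul 2) p3
  have hGN : Gv ≤ Nv := by
    have hU2 : Gv = -(∫ x, φ x * (Vpow u τ x * lapD lam mu u φ x)) := by
      linarith [hsplit2]
    rw [hU2, hNv, ← integral_neg]
    exact integral_mono iU2.neg ig1g2 pU
  have h1 : (C + 1) * Iv ≤ 2 * Mv := by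
    have := hsplit1
    linarith [hT1b, hT2b, hT3b]
  -- Cauchy-Schwarz steps
  have cs1 := cauchy_schwarz_integral
    (fun x => ρ x * |φ x| * Vpow u ((τ + lam - mu) / 2) x)
    (fun x => ‖gradient φ x‖ * Vpow u (s₀ / 2) x) if1sq if2sq if12
  have ef1 : (∫ x, (ρ x * |φ x| * Vpow u ((τ + lam - mu) / 2) x) ^ 2) = Jv := by
    rw [hJv]
    congr 1
    funext x
    rw [mul_pow, mul_pow, sq_abs, Vpow_sq_half]
  have ef2 : (∫ x, (‖gradient φ x‖ * Vpow u (s₀ / 2) x) ^ 2) = Gv := by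
    rw [hGv]
    congr 1
    funext x
    rw [mul_pow, Vpow_sq_half]
  rw [ef1, ef2, ← hMv] at cs1
  have cs2 := cauchy_schwarz_integral
    (fun x => ρ x ^ 2 * |φ x| * Vpow u ((τ + lam - mu) / 2) x)
    (fun x => |φ x| * Vpow u ((τ + lam - mu) / 2) x) ifAsq ig1sq ifAg1
  have efA : (∫ x, (ρ x ^ 2 * |φ x| * Vpow u ((τ + lam - mu) / 2) x) *
      (|φ x| * Vpow u ((τ + lam - mu) / 2) x)) = Jv := by
    rw [hJv]
    congr 1
    funext x
    have h1 : |φ x| * |φ x| = φ x ^ 2 := by rw [abs_mul_abs_self]; ring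
    have h2 : Vpow u ((τ + lam - mu) / 2) x * Vpow u ((τ + lam - mu) / 2) x
        = Vpow u (τ + lam - mu) x := by rw [Vpow_mul, add_halves]
    linear_combination (ρ x ^ 2 * Vpow u ((τ + lam - mu) / 2) x *
        Vpow u ((τ + lam - mu) / 2) x) * h1 + (ρ x ^ 2 * φ x ^ 2) * h2
  have efA2 : (∫ x, (ρ x ^ 2 * |φ x| * Vpow u ((τ + lam - mu) / 2) x) ^ 2) = Av := by
    rw [hAv]
    congr 1
    funext x
    rw [mul_pow, mul_pow, sq_abs, Vpow_sq_half, ← pow_mul]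
  have eg1 : (∫ x, (|φ x| * Vpow u ((τ + lam - mu) / 2) x) ^ 2) = Iv := by
    rw [hIv]
    congr 1
    funext x
    rw [mul_pow, sq_abs, Vpow_sq_half]
  rw [efA, efA2, eg1] at cs2
  have cs3 := cauchy_schwarz_integral
    (fun x => |φ x| * Vpow u ((τ + lam - mu) / 2) x)
    (fun x => |lapD lam mu u φ x| * Vpow u ((τ + mu - lam) / 2) x) ig1sq ig2sq ig1g2
  have eg2 : (∫ x, (|lapD lam mu u φ x| * Vpow u ((τ + mu - lam) / 2) x) ^ 2) = Bv := by
    rw [hBv]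
    congr 1
    funext x
    rw [mul_pow, sq_abs, Vpow_sq_half]
  rw [eg1, eg2, ← hNv] at cs3
  -- nonnegativity
  have hI0 : 0 ≤ Iv := by
    rw [hIv]
    exact integral_nonneg fun x => mul_nonneg (sq_nonneg _) (Vpow_pos u _ x).le
  have hJ0 : 0 ≤ Jv := by
    rw [hJv]
    exact integral_nonneg fun x =>
      mul_nonneg (mul_nonneg (sq_nonneg _) (sq_nonneg _)) (Vpow_pos u _ x).le
  have hA0 : 0 ≤ Av := by
    rw [hAv]
    exact integral_nonneg fun x =>
      mul_nonneg (mul_nonneg (by positivity) (sq_nonneg _)) (Vpow_pos u _ x).le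
  have hB0 : 0 ≤ Bv := by
    rw [hBv]
    exact integral_nonneg fun x => mul_nonneg (sq_nonneg _) (Vpow_pos u _ x).le
  have hM0 : 0 ≤ Mv := by
    rw [hMv]
    exact integral_nonneg fun x =>
      mul_nonneg (mul_nonneg (mul_nonneg (hρ0 x) (abs_nonneg _)) (Vpow_pos u _ x).le)
        (mul_nonneg (norm_nonneg _) (Vpow_pos u _ x).le)
  have hN0 : 0 ≤ Nv := by
    rw [hNv]
    exact integral_nonneg fun x =>
      mul_nonneg (mul_nonneg (abs_nonneg _) (Vpow_pos u _ x).le)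
        (mul_nonneg (abs_nonneg _) (Vpow_pos u _ x).le)
  have hC0 : (0:ℝ) ≤ C + 1 := by linarith
  -- final assembly
  have ha : ((C + 1) * Iv) ^ 2 ≤ (2 * Mv) ^ 2 :=
    pow_le_pow_left₀ (mul_nonneg hC0 hI0) h1 2
  have hb : Jv * Gv ≤ Jv * Nv := mul_le_mul_of_nonneg_left hGN hJ0
  have h2 : (C + 1) ^ 2 * Iv ^ 2 ≤ 4 * (Jv * Nv) := by
    have e1 : ((C + 1) * Iv) ^ 2 = (C + 1) ^ 2 * Iv ^ 2 := by ring
    have e2 : (2 * Mv) ^ 2 = 4 * Mv ^ 2 := by ring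
    linarith [ha, cs1, hb, e1, e2]
  have h3 : ((C + 1) ^ 2 * Iv ^ 2) ^ 2 ≤ (4 * (Jv * Nv)) ^ 2 :=
    pow_le_pow_left₀ (mul_nonneg (pow_nonneg hC0 2) (sq_nonneg _)) h2 2
  have h5 : Jv ^ 2 * Nv ^ 2 ≤ (Av * Iv) * (Iv * Bv) :=
    mul_le_mul cs2 cs3 (sq_nonneg _) (mul_nonneg hA0 hI0)
  have h6 : ((C + 1) ^ 4 * Iv ^ 2) * Iv ^ 2 ≤ (16 * (Av * Bv)) * Iv ^ 2 := by
    have e3 : ((C + 1) ^ 2 * Iv ^ 2) ^ 2 = ((C + 1) ^ 4 * Iv ^ 2) * Iv ^ 2 := by ring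
    have e4 : (4 * (Jv * Nv)) ^ 2 = 16 * (Jv ^ 2 * Nv ^ 2) := by ring
    have e5 : 16 * ((Av * Iv) * (Iv * Bv)) = (16 * (Av * Bv)) * Iv ^ 2 := by ring
    linarith [h3, h5, e3, e4, e5]
  rcases eq_or_lt_of_le hI0 with h0 | hIpos
  · rw [ge_iff_le, ← h0]
    norm_num
    exact mul_nonneg hA0 hB0
  · have hI2 : (0:ℝ) < Iv ^ 2 := pow_pos hIpos 2
    have h7 : (C + 1) ^ 4 * Iv ^ 2 ≤ 16 * (Av * Bv) := le_of_mul_le_mul_right h6 hI2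
    rw [ge_iff_le]
    linarith [h7]
end
end

section
/- (Key intermediate inequality in the proof of Theorem 3.2(i), Euclidean model.) Let 1 < p < ∞, q ∈ ℝ and C ∈ ℝ with q - C - 1 > 0. Assume Δ^D ρ ≤ (C/ρ)·V^{λ-μ} pointwise on ℝⁿ \ ρ^{-1}{0}. Then for every φ ∈ C_c^∞(ℝⁿ \ ρ^{-1}{0}) one has (q - C - 1) ∫_{ℝⁿ} (|φ|^p / ρ^q) V^{τ+λ-μ} dx ≤ p ∫_{ℝⁿ} (|φ|^{p-1} / ρ^{q-1}) |∇^D φ| V^{τ+λ-μ} dx. -/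
set_option maxHeartbeats 1000000


open MeasureTheory Real Filter Topology

noncomputable section

namespace Stmt19Aux

open Filter Topology

variable {n : ℕ}

local notation "E" => EuclideanSpace ℝ (Fin n)

lemma clm_apply_eq_sum (T : E →L[ℝ] ℝ) (y : E) :
    ∑ i, T (EuclideanSpace.single i 1) * y i = T y := by
  have hy : y = ∑ i, y i • EuclideanSpace.single i (1 : ℝ) := by
    ext j
    rw [WithLp.ofLp_sum, Finset.sum_apply]
    simp [EuclideanSpace.single_apply]
  conv_rhs => rw [hy]
  rw [map_sum]
  congr 1; ext i
  rw [T.map_smul]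
  simp [mul_comm]

lemma fderiv_eq_inner_gradient {f : E → ℝ} {x : E} (v : E) :
    fderiv ℝ f x v = (inner ℝ (gradient f x) v : ℝ) := by
  rw [show gradient f x = (InnerProductSpace.toDual ℝ E).symm (fderiv ℝ f x) from rfl]
  rw [InnerProductSpace.toDual_symm_apply]

lemma contDiff_gradient {f : E → ℝ} (hf : ContDiff ℝ (⊤ : ℕ∞) f) :
    ContDiff ℝ (⊤ : ℕ∞) (fun x => gradient f x) := by
  have : (fun x => gradient f x)
      = (fun L => (InnerProductSpace.toDual ℝ E).symm L) ∘ (fderiv ℝ f) := rfl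
  rw [this]
  exact ((InnerProductSpace.toDual ℝ E).symm.toContinuousLinearEquiv
    : StrongDual ℝ E ≃L[ℝ] E).toContinuousLinearMap.contDiff.comp
    (hf.fderiv_right (by simp))

lemma integral_lineDeriv_eq_zero {g : E → ℝ} {D : NNReal}
    (hg : LipschitzWith D g) (h'g : HasCompactSupport g) (v : E) :
    ∫ x, lineDeriv ℝ g x v = 0 := by
  have h1 := LipschitzWith.integral_lineDeriv_mul_eq (μ := (volume : Measure E))
    (f := fun _ => (1 : ℝ)) (LipschitzWith.const 1) hg h'g (-v)
  simp only [lineDeriv, deriv_const', zero_mul, integral_zero, neg_neg, mul_one] at h1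
  exact h1.symm

end Stmt19Aux

theorem stmt19 {n : ℕ} (hn : 1 ≤ n) (lam mu : ℝ)
    (u : EuclideanSpace ℝ (Fin n) → ℝ) (hu : ContDiff ℝ (⊤ : ℕ∞) u)
    (τ : ℝ) (hτ : τ = ((n : ℝ) + 1) * lam + mu)
    (ρ : EuclideanSpace ℝ (Fin n) → ℝ) (hρsm : ContDiff ℝ (⊤ : ℕ∞) ρ)
    (hρ0 : ∀ x, 0 ≤ ρ x)
    (hρg : ∀ x, ρ x ≠ 0 → ‖gradD lam mu u ρ x‖ = 1)
    (p q C : ℝ) (hp : 1 < p) (hqC : 0 < q - C - 1)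
    (hΔ : ∀ x, ρ x ≠ 0 → lapD lam mu u ρ x ≤ (C / ρ x) * Vpow u (lam - mu) x)
    (φ : EuclideanSpace ℝ (Fin n) → ℝ) (hφ : ContDiff ℝ (⊤ : ℕ∞) φ)
    (hφc : HasCompactSupport φ) (hφs : tsupport φ ⊆ {x | ρ x ≠ 0}) :
    (q - C - 1) * ∫ x, |φ x| ^ p / ρ x ^ q * Vpow u (τ + lam - mu) x ≤
      p * ∫ x, (|φ x| ^ (p - 1) / ρ x ^ (q - 1)) * ‖gradD lam mu u φ x‖ *
        Vpow u (τ + lam - mu) x := by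
  classical
  have hppos : (0 : ℝ) < p := by linarith
  have hp10 : (0 : ℝ) < p - 1 := by linarith
  set s : ℝ := 2 * mu + (n : ℝ) * lam with hs
  set e : Fin n → EuclideanSpace ℝ (Fin n) := fun i => EuclideanSpace.single i 1 with he
  set L : EuclideanSpace ℝ (Fin n) → ℝ :=
    fun x => |φ x| ^ p / ρ x ^ q * Vpow u (τ + lam - mu) x with hLdef
  set R : EuclideanSpace ℝ (Fin n) → ℝ :=
    fun x => (|φ x| ^ (p - 1) / ρ x ^ (q - 1)) * ‖gradD lam mu u φ x‖ *
      Vpow u (τ + lam - mu) x with hRdef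
  set a : EuclideanSpace ℝ (Fin n) → ℝ :=
    fun y => |φ y| ^ p * ρ y ^ (1 - q) * Real.exp (s * u y) with hadef
  set X : Fin n → EuclideanSpace ℝ (Fin n) → ℝ :=
    fun i y => a y * gradient ρ y i with hXdef
  -- basic differentiability facts
  have hgradρ : ContDiff ℝ (⊤ : ℕ∞) (fun y => gradient ρ y) := Stmt19Aux.contDiff_gradient hρsm
  have hφd : Differentiable ℝ φ := hφ.differentiable (by simp)
  have hρd : Differentiable ℝ ρ := hρsm.differentiable (by simp)
  have hud : Differentiable ℝ u := hu.differentiable (by simp)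
  have hcase : ∀ x, ρ x = 0 → x ∉ tsupport φ := fun x h0 hx => (hφs hx) h0
  have hφzero : ∀ x, x ∉ tsupport φ → φ x = 0 := fun x hx => image_eq_zero_of_notMem_tsupport hx
  have haoff : ∀ x, x ∉ tsupport φ → a =ᶠ[𝓝 x] 0 := by
    intro x hx
    have hev : φ =ᶠ[𝓝 x] 0 := notMem_tsupport_iff_eventuallyEq.1 hx
    filter_upwards [hev] with y hy
    simp [hadef, hy, Real.zero_rpow hppos.ne']
  -- `a` is C¹
  have haC1 : ContDiff ℝ 1 a := by
    rw [contDiff_iff_contDiffAt]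
    intro x
    by_cases h0 : ρ x = 0
    · exact (contDiffAt_const (c := (0 : ℝ))).congr_of_eventuallyEq (haoff x (hcase x h0))
    · have h1 : ContDiffAt ℝ 1 (fun y => |φ y| ^ p) x := by
        have h1' : ContDiff ℝ 1 fun y => ‖φ y‖ ^ p := (hφ.of_le (by simp)).norm_rpow hp
        simpa [Real.norm_eq_abs] using h1'.contDiffAt
      have h2 : ContDiffAt ℝ 1 (fun y => ρ y ^ (1 - q)) x :=
        (Real.contDiffAt_rpow_const_of_ne (p := 1 - q) h0).comp x (hρsm.of_le (by simp)).contDiffAt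
      have h3 : ContDiffAt ℝ 1 (fun y => Real.exp (s * u y)) x :=
        (Real.contDiff_exp.comp (contDiff_const.mul (hu.of_le (by simp)))).contDiffAt
      exact (h1.mul h2).mul h3
  have hXC1 : ∀ i, ContDiff ℝ 1 (X i) := fun i =>
    haC1.mul (((EuclideanSpace.proj (𝕜 := ℝ) i).contDiff.comp hgradρ).of_le (by simp))
  have hXsupp : ∀ i, HasCompactSupport (X i) := by
    intro i
    apply HasCompactSupport.intro hφc
    intro x hx
    simp [hXdef, hadef, hφzero x hx, Real.zero_rpow hppos.ne']
  have hXdiff : ∀ i, Differentiable ℝ (X i) := fun i => (hXC1 i).differentiable one_ne_zero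
  -- the integrand functions
  set g : Fin n → EuclideanSpace ℝ (Fin n) → ℝ :=
    fun i x => fderiv ℝ (X i) x (e i) with hgdef
  set G : EuclideanSpace ℝ (Fin n) → ℝ := fun x => ∑ i, g i x with hGdef
  -- each ∫ g i = 0
  have hgzero : ∀ i, ∫ x, g i x = 0 := by
    intro i
    obtain ⟨K, hK⟩ := ContDiff.lipschitzWith_of_hasCompactSupport (hXsupp i) (hXC1 i) one_ne_zero
    have h1 : ∀ x, g i x = lineDeriv ℝ (X i) x (e i) := fun x =>
      ((((hXdiff i) x).hasFDerivAt).hasLineDerivAt (e i)).lineDeriv.symm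
    calc ∫ x, g i x = ∫ x, lineDeriv ℝ (X i) x (e i) := by
          exact integral_congr_ae (Filter.Eventually.of_forall h1)
      _ = 0 := Stmt19Aux.integral_lineDeriv_eq_zero hK (hXsupp i) (e i)
  -- each g i is integrable
  have hgint : ∀ i, Integrable (g i) := by
    intro i
    apply Continuous.integrable_of_hasCompactSupport
    · exact ((hXC1 i).continuous_fderiv one_ne_zero).clm_apply continuous_const
    · have h2 : HasCompactSupport (fderiv ℝ (X i)) := (hXsupp i).fderiv ℝ
      exact h2.comp_left (g := fun T : EuclideanSpace ℝ (Fin n) →L[ℝ] ℝ => T (e i)) rfl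
  have hGint : Integrable G := by
    have := integrable_finset_sum (μ := (volume : Measure (EuclideanSpace ℝ (Fin n))))
      Finset.univ (fun i (_ : i ∈ Finset.univ) => hgint i)
    simpa [hGdef] using this
  have hGzero : ∫ x, G x = 0 := by
    rw [hGdef]
    rw [integral_finset_sum _ (fun i _ => hgint i)]
    simp [hgzero]
  -- integrability helper
  have hint_aux : ∀ F : EuclideanSpace ℝ (Fin n) → ℝ,
      (∀ x, ρ x ≠ 0 → ContinuousAt F x) → (∀ x, x ∉ tsupport φ → F x = 0) →
      Integrable F := by
    intro F h1 h2
    have hFsupp : HasCompactSupport F := HasCompactSupport.intro hφc h2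
    have hFcont : Continuous F := by
      rw [continuous_iff_continuousAt]
      intro x
      by_cases h0 : ρ x = 0
      · have hx := hcase x h0
        have hev : F =ᶠ[𝓝 x] (fun _ => 0) := by
          filter_upwards [(isClosed_tsupport φ).isOpen_compl.mem_nhds hx] with y hy
          exact h2 y hy
        exact continuousAt_const.congr hev.symm
      · exact h1 x h0
    exact hFcont.integrable_of_hasCompactSupport hFsupp
  have hVcont : ∀ c : ℝ, Continuous (fun x => Vpow u c x) := by
    intro c
    exact Real.continuous_exp.comp (continuous_const.mul hu.continuous)
  have habs : Continuous (fun x => |φ x| ^ p) :=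
    ((hφ.of_le (by simp)).norm_rpow hp).continuous.congr (fun x => by simp [Real.norm_eq_abs])
  have habs1 : Continuous (fun x => |φ x| ^ (p - 1)) := by
    rw [continuous_iff_continuousAt]
    intro x
    exact (Real.continuousAt_rpow_const _ _ (Or.inr hp10.le)).comp
      (continuous_abs.comp hφ.continuous).continuousAt
  have hLint : Integrable L := by
    apply hint_aux
    · intro x h0
      have hrq : ContinuousAt (fun y => ρ y ^ q) x :=
        (Real.continuousAt_rpow_const _ _ (Or.inl h0)).comp hρsm.continuous.continuousAt
      have hrqne : ρ x ^ q ≠ 0 :=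
        (Real.rpow_pos_of_pos ((hρ0 x).lt_of_ne (Ne.symm h0)) q).ne'
      exact ((habs.continuousAt.div hrq hrqne).mul (hVcont _).continuousAt)
    · intro x hx
      simp [hLdef, hφzero x hx, Real.zero_rpow hppos.ne']
  have hRint : Integrable R := by
    apply hint_aux
    · intro x h0
      have hrq : ContinuousAt (fun y => ρ y ^ (q - 1)) x :=
        (Real.continuousAt_rpow_const _ _ (Or.inl h0)).comp hρsm.continuous.continuousAt
      have hrqne : ρ x ^ (q - 1) ≠ 0 :=
        (Real.rpow_pos_of_pos ((hρ0 x).lt_of_ne (Ne.symm h0)) (q - 1)).ne'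
      have hgD : Continuous (fun y => ‖gradD lam mu u φ y‖) := by
        have : Continuous (fun y => gradD lam mu u φ y) :=
          ((hVcont (mu - lam)).smul (Stmt19Aux.contDiff_gradient hφ).continuous)
        exact this.norm
      exact (((habs1.continuousAt.div hrq hrqne).mul hgD.continuousAt).mul
        (hVcont _).continuousAt)
    · intro x hx
      simp [hRdef, hφzero x hx, Real.zero_rpow hp10.ne']
  -- pointwise bound
  have hpt : ∀ x, G x ≤ p * R x - (q - C - 1) * L x := by
    intro x
    by_cases h0 : ρ x = 0
    · have hx := hcase x h0
      have hGx : G x = 0 := by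
        rw [hGdef]
        apply Finset.sum_eq_zero
        intro i _
        have hXoff : X i =ᶠ[𝓝 x] 0 := by
          filter_upwards [haoff x hx] with y hy
          simp [hXdef, hy]
        have : fderiv ℝ (X i) x = fderiv ℝ (fun _ => (0:ℝ)) x := hXoff.fderiv_eq
        simp [hgdef, this]
      have hLx : L x = 0 := by simp [hLdef, hφzero x hx, Real.zero_rpow hppos.ne']
      have hRx : R x = 0 := by simp [hRdef, hφzero x hx, Real.zero_rpow hp10.ne']
      rw [hGx, hLx, hRx]; ring_nf; rfl
    · have hr : 0 < ρ x := (hρ0 x).lt_of_ne (Ne.symm h0)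
      have hdφ := (hφd x).hasFDerivAt
      have hdρ := (hρd x).hasFDerivAt
      have hdu := (hud x).hasFDerivAt
      have hA : HasFDerivAt (fun y => |φ y| ^ p)
          ((p * |φ x| ^ (p - 2) * φ x) • fderiv ℝ φ x) x :=
        (hasDerivAt_abs_rpow (φ x) hp).comp_hasFDerivAt x hdφ
      have hB : HasFDerivAt (fun y => ρ y ^ (1 - q))
          (((1 - q) * ρ x ^ (1 - q - 1)) • fderiv ℝ ρ x) x :=
        (Real.hasDerivAt_rpow_const (Or.inl hr.ne')).comp_hasFDerivAt x hdρ
      have hW : HasFDerivAt (fun y => Real.exp (s * u y))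
          ((Real.exp (s * u x) * s) • fderiv ℝ u x) x := by
        have h1 : HasFDerivAt (fun y => s * u y) (s • fderiv ℝ u x) x := hdu.const_mul s
        have h2 := (Real.hasDerivAt_exp (s * u x)).comp_hasFDerivAt x h1
        rw [smul_smul] at h2
        exact h2
      have ha' : HasFDerivAt a
          ((|φ x| ^ p * ρ x ^ (1 - q)) • ((Real.exp (s * u x) * s) • fderiv ℝ u x)
            + Real.exp (s * u x) •
              ((|φ x| ^ p) • (((1 - q) * ρ x ^ (1 - q - 1)) • fderiv ℝ ρ x)
               + (ρ x ^ (1 - q)) • ((p * |φ x| ^ (p - 2) * φ x) • fderiv ℝ φ x))) x :=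
        (hA.mul hB).mul hW
      have hgrd : Differentiable ℝ (fun y => gradient ρ y) := hgradρ.differentiable (by simp)
      have hhi : ∀ i, HasFDerivAt (fun y => gradient ρ y i)
          ((EuclideanSpace.proj (𝕜 := ℝ) i).comp (fderiv ℝ (fun y => gradient ρ y) x)) x :=
        fun i => ((EuclideanSpace.proj (𝕜 := ℝ) i).hasFDerivAt).comp x (hgrd x).hasFDerivAt
      have hgval : ∀ i, g i x =
          a x * ((fderiv ℝ (fun y => gradient ρ y) x) (e i) i)
          + (p * |φ x| ^ (p - 2) * φ x * (ρ x ^ (1 - q) * Real.exp (s * u x)))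
              * (fderiv ℝ φ x (e i) * gradient ρ x i)
          + ((1 - q) * ρ x ^ (1 - q - 1) * (|φ x| ^ p * Real.exp (s * u x)))
              * (fderiv ℝ ρ x (e i) * gradient ρ x i)
          + (s * Real.exp (s * u x) * (|φ x| ^ p * ρ x ^ (1 - q)))
              * (fderiv ℝ u x (e i) * gradient ρ x i) := by
        intro i
        have hXi := ha'.mul (hhi i)
        show fderiv ℝ (a * fun y => gradient ρ y i) x (e i) = _
        rw [hXi.fderiv]
        simp only [ContinuousLinearMap.add_apply, ContinuousLinearMap.coe_smul',
          Pi.smul_apply, smul_eq_mul, ContinuousLinearMap.coe_comp', Function.comp_apply,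
          PiLp.proj_apply, hadef]
        ring
      have hGx : G x = a x * lapE ρ x
          + (p * |φ x| ^ (p - 2) * φ x * (ρ x ^ (1 - q) * Real.exp (s * u x)))
              * fderiv ℝ φ x (gradient ρ x)
          + ((1 - q) * ρ x ^ (1 - q - 1) * (|φ x| ^ p * Real.exp (s * u x)))
              * fderiv ℝ ρ x (gradient ρ x)
          + (s * Real.exp (s * u x) * (|φ x| ^ p * ρ x ^ (1 - q)))
              * fderiv ℝ u x (gradient ρ x) := by
        have e1 : ∀ (T : EuclideanSpace ℝ (Fin n) →L[ℝ] ℝ),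
            ∑ i, T (e i) * gradient ρ x i = T (gradient ρ x) := by
          intro T
          simp only [he]
          exact Stmt19Aux.clm_apply_eq_sum T (gradient ρ x)
        have e2 : ∑ i, (fderiv ℝ (fun y => gradient ρ y) x) (e i) i = lapE ρ x := by
          simp only [he, lapE, divE]
        calc G x = ∑ i, g i x := rfl
          _ = ∑ i, (a x * ((fderiv ℝ (fun y => gradient ρ y) x) (e i) i)
              + (p * |φ x| ^ (p - 2) * φ x * (ρ x ^ (1 - q) * Real.exp (s * u x)))
                  * (fderiv ℝ φ x (e i) * gradient ρ x i)
              + ((1 - q) * ρ x ^ (1 - q - 1) * (|φ x| ^ p * Real.exp (s * u x)))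
                  * (fderiv ℝ ρ x (e i) * gradient ρ x i)
              + (s * Real.exp (s * u x) * (|φ x| ^ p * ρ x ^ (1 - q)))
                  * (fderiv ℝ u x (e i) * gradient ρ x i)) :=
            Finset.sum_congr rfl (fun i _ => hgval i)
          _ = _ := by
            rw [Finset.sum_add_distrib, Finset.sum_add_distrib, Finset.sum_add_distrib,
              ← Finset.mul_sum, ← Finset.mul_sum, ← Finset.mul_sum, ← Finset.mul_sum,
              e1, e1, e1, e2]
      -- norm of gradient of ρ
      have hprod : Real.exp ((lam - mu) * u x) * Real.exp ((mu - lam) * u x) = 1 := by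
        rw [← Real.exp_add]
        have : (lam - mu) * u x + (mu - lam) * u x = 0 := by ring
        rw [this, Real.exp_zero]
      have hρg1 := hρg x h0
      have hgρnorm : Real.exp ((mu - lam) * u x) * ‖gradient ρ x‖ = 1 := by
        have : ‖gradD lam mu u ρ x‖ = Real.exp ((mu - lam) * u x) * ‖gradient ρ x‖ := by
          simp only [gradD, Vpow]
          rw [norm_smul, Real.norm_eq_abs, abs_of_pos (Real.exp_pos _)]
        rw [← this, hρg1]
      have hgr : ‖gradient ρ x‖ = Real.exp ((lam - mu) * u x) := by
        calc ‖gradient ρ x‖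
            = (Real.exp ((lam - mu) * u x) * Real.exp ((mu - lam) * u x)) * ‖gradient ρ x‖ := by
              rw [hprod, one_mul]
          _ = Real.exp ((lam - mu) * u x)
              * (Real.exp ((mu - lam) * u x) * ‖gradient ρ x‖) := by ring
          _ = Real.exp ((lam - mu) * u x) := by rw [hgρnorm, mul_one]
      have hfρ : fderiv ℝ ρ x (gradient ρ x)
          = Real.exp ((lam - mu) * u x) * Real.exp ((lam - mu) * u x) := by
        rw [Stmt19Aux.fderiv_eq_inner_gradient, real_inner_self_eq_norm_mul_norm, hgr]
      have hfu : fderiv ℝ u x (gradient ρ x) = (inner ℝ (gradient u x) (gradient ρ x) : ℝ) :=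
        Stmt19Aux.fderiv_eq_inner_gradient _
      have hfφ : |fderiv ℝ φ x (gradient ρ x)|
          ≤ ‖gradient φ x‖ * Real.exp ((lam - mu) * u x) := by
        rw [Stmt19Aux.fderiv_eq_inner_gradient, ← hgr]
        exact abs_real_inner_le_norm _ _
      -- Laplacian bound
      have hlap := hΔ x h0
      simp only [lapD, Vpow] at hlap
      rw [← hs] at hlap
      have hlap2 : lapE ρ x + s * (inner ℝ (gradient u x) (gradient ρ x) : ℝ)
          ≤ (C / ρ x) * (Real.exp ((lam - mu) * u x) * Real.exp ((lam - mu) * u x)) := by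
        have h3 := mul_le_mul_of_nonneg_left hlap (Real.exp_pos ((lam - mu) * u x)).le
        calc lapE ρ x + s * (inner ℝ (gradient u x) (gradient ρ x) : ℝ)
            = (Real.exp ((lam - mu) * u x) * Real.exp ((mu - lam) * u x))
              * (lapE ρ x + s * (inner ℝ (gradient u x) (gradient ρ x) : ℝ)) := by
              rw [hprod, one_mul]
          _ = Real.exp ((lam - mu) * u x) * (Real.exp ((mu - lam) * u x)
              * (lapE ρ x + s * (inner ℝ (gradient u x) (gradient ρ x) : ℝ))) := by ring
          _ ≤ Real.exp ((lam - mu) * u x) * (C / ρ x * Real.exp ((lam - mu) * u x)) := h3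
          _ = (C / ρ x) * (Real.exp ((lam - mu) * u x) * Real.exp ((lam - mu) * u x)) := by ring
      -- |φ x|^(p-2) * φ x * dφ(∇ρ) bound
      have hFpow : |φ x| ^ (p - 2) * |φ x| = |φ x| ^ (p - 1) := by
        rcases eq_or_lt_of_le (abs_nonneg (φ x)) with h|h
        · rw [← h, mul_zero, Real.zero_rpow (by linarith : p - 1 ≠ 0)]
        · rw [show (p - 1 : ℝ) = (p - 2) + 1 by ring, Real.rpow_add h, Real.rpow_one]
      have k4 : |φ x| ^ (p - 2) * φ x * fderiv ℝ φ x (gradient ρ x)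
          ≤ |φ x| ^ (p - 1) * (‖gradient φ x‖ * Real.exp ((lam - mu) * u x)) := by
        calc |φ x| ^ (p - 2) * φ x * fderiv ℝ φ x (gradient ρ x)
            ≤ abs (|φ x| ^ (p - 2) * φ x * fderiv ℝ φ x (gradient ρ x)) := le_abs_self _
          _ = |φ x| ^ (p - 2) * |φ x| * abs (fderiv ℝ φ x (gradient ρ x)) := by
              rw [abs_mul, abs_mul,
                abs_of_nonneg (Real.rpow_nonneg (abs_nonneg (φ x)) (p - 2))]
          _ ≤ |φ x| ^ (p - 2) * |φ x| * (‖gradient φ x‖ * Real.exp ((lam - mu) * u x)) := by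
              apply mul_le_mul_of_nonneg_left hfφ
              positivity
          _ = |φ x| ^ (p - 1) * (‖gradient φ x‖ * Real.exp ((lam - mu) * u x)) := by
              rw [hFpow]
      -- combine
      have hstep : G x
          ≤ (Real.exp (s * u x) * ρ x ^ (1 - q) * |φ x| ^ p)
              * ((C / ρ x) * (Real.exp ((lam - mu) * u x) * Real.exp ((lam - mu) * u x)))
            + (p * Real.exp (s * u x) * ρ x ^ (1 - q))
              * (|φ x| ^ (p - 1) * (‖gradient φ x‖ * Real.exp ((lam - mu) * u x)))
            + ((1 - q) * ρ x ^ (1 - q - 1) * (|φ x| ^ p * Real.exp (s * u x)))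
              * (Real.exp ((lam - mu) * u x) * Real.exp ((lam - mu) * u x)) := by
        have c1nn : (0:ℝ) ≤ Real.exp (s * u x) * ρ x ^ (1 - q) * |φ x| ^ p := by positivity
        have c2nn : (0:ℝ) ≤ p * Real.exp (s * u x) * ρ x ^ (1 - q) := by positivity
        have t1 := mul_le_mul_of_nonneg_left hlap2 c1nn
        have t2 := mul_le_mul_of_nonneg_left k4 c2nn
        have hexpand : G x
            = (Real.exp (s * u x) * ρ x ^ (1 - q) * |φ x| ^ p)
                * (lapE ρ x + s * (inner ℝ (gradient u x) (gradient ρ x) : ℝ))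
              + (p * Real.exp (s * u x) * ρ x ^ (1 - q))
                * (|φ x| ^ (p - 2) * φ x * fderiv ℝ φ x (gradient ρ x))
              + ((1 - q) * ρ x ^ (1 - q - 1) * (|φ x| ^ p * Real.exp (s * u x)))
                * (Real.exp ((lam - mu) * u x) * Real.exp ((lam - mu) * u x)) := by
          rw [hGx, hfρ, hfu, hadef]
          ring
        rw [hexpand]
        linarith [t1, t2]
      refine hstep.trans (le_of_eq ?_)
      -- final algebraic identity
      have hgDφ : ‖gradD lam mu u φ x‖
          = Real.exp ((mu - lam) * u x) * ‖gradient φ x‖ := by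
        simp only [gradD, Vpow]
        rw [norm_smul, Real.norm_eq_abs, abs_of_pos (Real.exp_pos _)]
      have e3 : ρ x ^ (1 - q) = ρ x / ρ x ^ q := by
        rw [show (1 - q : ℝ) = 1 - q from rfl, Real.rpow_sub hr, Real.rpow_one]
      have e1 : ρ x ^ (1 - q - 1) = ρ x ^ (1 - q) / ρ x := by
        rw [Real.rpow_sub hr, Real.rpow_one]
      have e4 : ρ x ^ (q - 1) = ρ x ^ q / ρ x := by
        rw [Real.rpow_sub hr, Real.rpow_one]
      have eV : Vpow u (τ + lam - mu) x
          = Real.exp (s * u x) * (Real.exp ((lam - mu) * u x) * Real.exp ((lam - mu) * u x)) := by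
        simp only [Vpow]
        rw [← Real.exp_add, ← Real.exp_add]
        congr 1
        rw [hτ, hs]
        ring
      have eMu : Real.exp ((mu - lam) * u x) = (Real.exp ((lam - mu) * u x))⁻¹ := by
        rw [← Real.exp_neg]
        congr 1
        ring
      have hrqne : ρ x ^ q ≠ 0 := (Real.rpow_pos_of_pos hr q).ne'
      have hEne : Real.exp ((lam - mu) * u x) ≠ 0 := (Real.exp_pos _).ne'
      simp only [hRdef, hLdef, hgDφ, eV, eMu, e3, e1, e4]
      field_simp
      ring
  -- final assembly
  have h1 : ∫ x, G x ≤ ∫ x, (p * R x - (q - C - 1) * L x) :=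
    integral_mono hGint ((hRint.const_mul p).sub (hLint.const_mul (q - C - 1))) hpt
  rw [hGzero, integral_sub (hRint.const_mul p) (hLint.const_mul _),
    integral_const_mul, integral_const_mul] at h1
  linarith
end
end
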